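/- arXiv:1205.0570 — 3 statements merged into one kernel-verified Lean document; each statement's English description precedes it below -/
import Mathlib

section
/- For all n ≥ 1, the polynomial A_{2n}(x) = Σ_{σ ∈ UD_{2n}} x^{mmp^{(1,0,0,0)}(σ)} satisfies the recursion A_{2n}(x) = Σ_{k=1}^{n} C(2n-1, 2k-1) · B_{2k-1}(1) · x^{2k-1} · A_{2n-2k}(x), where B_{2k-1}(1) = |UD_{2k-1}| is the number of up-down permutations of length 2k-1, C(·,·) denotes binomial coefficients, and A_0(x) = 1. -/
open Finset

/-- Number of indices `i` such that there exists `j > i` with `σ j > σ i`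
    (the statistic mmp^{(1,0,0,0)}). -/
noncomputable def mmp1000 {n : ℕ} (σ : Equiv.Perm (Fin n)) : ℕ :=
  (Finset.univ.filter (fun i : Fin n => ∃ j : Fin n, i < j ∧ σ i < σ j)).card

/-- Number of indices `i` such that there exists `j < i` with `σ j > σ i`
    (the statistic mmp^{(0,1,0,0)}). -/
noncomputable def mmp0100 {n : ℕ} (σ : Equiv.Perm (Fin n)) : ℕ :=
  (Finset.univ.filter (fun i : Fin n => ∃ j : Fin n, j < i ∧ σ i < σ j)).card

/-- Number of indices `i` such that there exists `j > i` with `σ j < σ i`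
    (the statistic mmp^{(0,0,0,1)}). -/
noncomputable def mmp0001 {n : ℕ} (σ : Equiv.Perm (Fin n)) : ℕ :=
  (Finset.univ.filter (fun i : Fin n => ∃ j : Fin n, i < j ∧ σ j < σ i)).card

/-- σ is up-down: σ(1) < σ(2) > σ(3) < σ(4) > ⋯ (0-indexed: ascent at even indices). -/
def IsUpDown {n : ℕ} (σ : Equiv.Perm (Fin n)) : Prop :=
  ∀ i : Fin n, ∀ h : (i : ℕ) + 1 < n,
    if (i : ℕ) % 2 = 0 then σ i < σ ⟨(i : ℕ) + 1, h⟩ else σ ⟨(i : ℕ) + 1, h⟩ < σ i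

/-- σ is down-up: σ(1) > σ(2) < σ(3) > σ(4) < ⋯ (0-indexed: descent at even indices). -/
def IsDownUp {n : ℕ} (σ : Equiv.Perm (Fin n)) : Prop :=
  ∀ i : Fin n, ∀ h : (i : ℕ) + 1 < n,
    if (i : ℕ) % 2 = 0 then σ ⟨(i : ℕ) + 1, h⟩ < σ i else σ i < σ ⟨(i : ℕ) + 1, h⟩

open scoped Classical in
/-- The set of up-down permutations of length `m`. -/
noncomputable def UDset (m : ℕ) : Finset (Equiv.Perm (Fin m)) :=
  Finset.univ.filter (fun σ => IsUpDown σ)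

open scoped Classical in
/-- The set of down-up permutations of length `m`. -/
noncomputable def DUset (m : ℕ) : Finset (Equiv.Perm (Fin m)) :=
  Finset.univ.filter (fun σ => IsDownUp σ)

/-- The reverse of σ: σ^r(i) = σ(n+1-i). -/
def permReverse {n : ℕ} (σ : Equiv.Perm (Fin n)) : Equiv.Perm (Fin n) :=
  Fin.revPerm.trans σ

/-- The complement of σ: σ^c(i) = n+1-σ(i). -/
def permComplement {n : ℕ} (σ : Equiv.Perm (Fin n)) : Equiv.Perm (Fin n) :=
  σ.trans Fin.revPerm

/-- A_{2n}(x) = Σ_{σ ∈ UD_{2n}} x^{mmp^{(1,0,0,0)}(σ)}. -/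
noncomputable def Apoly (n : ℕ) (x : ℤ) : ℤ :=
  ∑ σ ∈ UDset (2 * n), x ^ mmp1000 σ

/-- B_{2n+1}(x) = Σ_{σ ∈ UD_{2n+1}} x^{mmp^{(1,0,0,0)}(σ)}. -/
noncomputable def Bpoly (n : ℕ) (x : ℤ) : ℤ :=
  ∑ σ ∈ UDset (2 * n + 1), x ^ mmp1000 σ

/-- C_{2n}(x) = Σ_{σ ∈ DU_{2n}} x^{mmp^{(1,0,0,0)}(σ)}. -/
noncomputable def Cpoly (n : ℕ) (x : ℤ) : ℤ :=
  ∑ σ ∈ DUset (2 * n), x ^ mmp1000 σ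

/-- D_{2n+1}(x) = Σ_{σ ∈ DU_{2n+1}} x^{mmp^{(1,0,0,0)}(σ)}. -/
noncomputable def Dpoly (n : ℕ) (x : ℤ) : ℤ :=
  ∑ σ ∈ DUset (2 * n + 1), x ^ mmp1000 σ

/-- Number of up-down permutations of length m. -/
noncomputable def udCount (m : ℕ) : ℕ := (UDset m).card

/-- Number of down-up permutations of length m. -/
noncomputable def duCount (m : ℕ) : ℕ := (DUset m).card

open scoped Classical in
/-- |{σ ∈ UD_{2m} : mmp^{(1,0,0,0)}(σ) = c}|. -/
noncomputable def AcountEq (m c : ℕ) : ℕ :=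
  ((UDset (2 * m)).filter (fun σ => mmp1000 σ = c)).card

open scoped Classical in
/-- |{σ ∈ DU_{2m+1} : mmp^{(1,0,0,0)}(σ) = c}|. -/
noncomputable def DcountEq (m c : ℕ) : ℕ :=
  ((DUset (2 * m + 1)).filter (fun σ => mmp1000 σ = c)).card

open scoped Classical in
/-- |{σ ∈ UD_{2m+1} : mmp^{(1,0,0,0)}(σ) = c}|. -/
noncomputable def BcountEq (m c : ℕ) : ℕ :=
  ((UDset (2 * m + 1)).filter (fun σ => mmp1000 σ = c)).card

open scoped Classical in
/-- |{σ ∈ DU_{2m} : mmp^{(1,0,0,0)}(σ) = c}|. -/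
noncomputable def CcountEq (m c : ℕ) : ℕ :=
  ((DUset (2 * m)).filter (fun σ => mmp1000 σ = c)).card


open Finset Function

variable {N m : ℕ}

/-- The word on `Fin m` with values the set `S`, in pattern `α`. -/
def embWord (S : Finset (Fin N)) (h : S.card = m) (α : Equiv.Perm (Fin m)) (i : Fin m) : Fin N :=
  S.orderEmbOfFin h (α i)

lemma embWord_mem (S : Finset (Fin N)) (h : S.card = m) (α : Equiv.Perm (Fin m)) (i : Fin m) :
    embWord S h α i ∈ S := Finset.orderEmbOfFin_mem S h _

lemma embWord_lt_iff (S : Finset (Fin N)) (h : S.card = m) (α : Equiv.Perm (Fin m)) (i j : Fin m) :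
    embWord S h α i < embWord S h α j ↔ α i < α j :=
  (S.orderEmbOfFin h).lt_iff_lt

lemma embWord_injective (S : Finset (Fin N)) (h : S.card = m) (α : Equiv.Perm (Fin m)) :
    Injective (embWord S h α) :=
  (S.orderEmbOfFin h).injective.comp α.injective

/-- The standardization of an injective word. -/
noncomputable def stdPerm (w : Fin m → Fin N) (hw : Injective w) : Equiv.Perm (Fin m) :=
  Equiv.ofBijective
    (fun i => ((Finset.univ.image w).orderIsoOfFin
        (by rw [Finset.card_image_of_injective _ hw, card_univ, Fintype.card_fin] : (Finset.univ.image w).card = m)).symm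
      ⟨w i, Finset.mem_image_of_mem _ (mem_univ i)⟩)
    ((Finite.injective_iff_bijective).mp (fun i j hij => hw (by
      have h2 := congrArg (((Finset.univ.image w).orderIsoOfFin
        (by rw [Finset.card_image_of_injective _ hw, card_univ, Fintype.card_fin]))) hij
      simp only [OrderIso.apply_symm_apply] at h2
      exact congrArg Subtype.val h2)))

lemma stdPerm_lt_iff (w : Fin m → Fin N) (hw : Injective w) (i j : Fin m) :
    stdPerm w hw i < stdPerm w hw j ↔ w i < w j := by
  simp only [stdPerm, Equiv.ofBijective_apply]
  rw [OrderIso.lt_iff_lt]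
  exact Subtype.mk_lt_mk

/-- Comparison-equivalent permutations are equal. -/
lemma perm_eq_of_lt_iff {β γ : Equiv.Perm (Fin m)}
    (hc : ∀ i j, β i < β j ↔ γ i < γ j) : β = γ := by
  have hsm : StrictMono (fun i => γ (β.symm i)) := by
    intro i j hij
    rw [← hc]
    simpa using hij
  have hid : StrictMono (fun i : Fin m => i) := strictMono_id
  have hr : Set.range (fun i => γ (β.symm i)) = Set.range (fun i : Fin m => i) := by
    have : (fun i => γ (β.symm i)) = γ ∘ β.symm := rfl
    rw [this, Set.range_comp, Equiv.range_eq_univ, Set.image_univ, Equiv.range_eq_univ]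
    simp
  haveI : WellFoundedLT (Fin m) := Finite.to_wellFoundedLT
  have := (StrictMono.range_inj (β := Fin m) (γ := Fin m) hsm hid).1 hr
  ext i
  have h3 := congrFun this (β i)
  simp only [Equiv.symm_apply_apply] at h3
  exact congrArg Fin.val h3.symm

/-- If all values of an injective word lie in `S` of the right cardinality,
then the word is the `embWord` of its standardization. -/
lemma embWord_stdPerm (S : Finset (Fin N)) (h : S.card = m) (w : Fin m → Fin N)
    (hw : Injective w) (hmem : ∀ i, w i ∈ S) :
    embWord S h (stdPerm w hw) = w := by
  have hsm : StrictMono (fun i => w ((stdPerm w hw).symm i)) := by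
    intro i j hij
    rw [← stdPerm_lt_iff w hw]
    simpa using hij
  have := Finset.orderEmbOfFin_unique h (f := fun i => w ((stdPerm w hw).symm i))
    (fun i => hmem _) hsm
  funext i
  have := congrFun this (stdPerm w hw i)
  simp only [Equiv.symm_apply_apply] at this
  rw [embWord, ← this]

lemma stdPerm_eq_of_lt_iff (w : Fin m → Fin N) (hw : Injective w) (β : Equiv.Perm (Fin m))
    (hβ : ∀ i j, β i < β j ↔ w i < w j) : stdPerm w hw = β :=
  perm_eq_of_lt_iff (fun i j => (stdPerm_lt_iff w hw i j).trans (hβ i j).symm)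

lemma stdPerm_embWord (S : Finset (Fin N)) (h : S.card = m) (α : Equiv.Perm (Fin m)) :
    stdPerm (embWord S h α) (embWord_injective S h α) = α :=
  stdPerm_eq_of_lt_iff _ _ α (fun i j => (embWord_lt_iff S h α i j).symm)

lemma embWord_image {N m : ℕ} (S : Finset (Fin N)) (h : S.card = m) (α : Equiv.Perm (Fin m)) :
    Finset.univ.image (embWord S h α) = S := by
  apply Finset.eq_of_subset_of_card_le
  · intro x hx
    obtain ⟨i, -, rfl⟩ := mem_image.mp hx
    exact embWord_mem S h α i
  · rw [Finset.card_image_of_injective _ (embWord_injective S h α), card_univ,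
      Fintype.card_fin, h]

lemma lt_top_of_ne {n : ℕ} {i : Fin (2*n)} (h : i ≠ ⟨2*n-1, by have := i.isLt; omega⟩) :
    i < (⟨2*n-1, by have := i.isLt; omega⟩ : Fin (2*n)) := by
  have h1 := i.isLt
  have h2 : (i : ℕ) ≠ 2*n-1 := fun hh => h (Fin.ext hh)
  exact Fin.mk_lt_mk.mpr (by omega)

lemma mem_S_lt_top {n : ℕ} (hn : 0 < n) {S : Finset (Fin (2*n))} (hSsub : S ⊆ univ.erase ⟨2*n-1, by omega⟩)
    {x : Fin (2*n)} (hx : x ∈ S) :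
    x < (⟨2*n-1, by have := x.isLt; omega⟩ : Fin (2*n)) := by
  have := hSsub hx
  rw [mem_erase] at this
  exact lt_top_of_ne this.1

lemma mem_T_lt_top {n : ℕ} (hn : 0 < n) {S T : Finset (Fin (2*n))}
    (hTdef : T = (univ.erase ⟨2*n-1, by omega⟩) \ S) {x : Fin (2*n)} (hx : x ∈ T) :
    x < (⟨2*n-1, by have := x.isLt; omega⟩ : Fin (2*n)) := by
  rw [hTdef, mem_sdiff, mem_erase] at hx
  exact lt_top_of_ne hx.1.1

section Assemble

variable {n k : ℕ}

/-- Assembled function. -/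
noncomputable def asmF (hk1 : 1 ≤ k) (hkn : k ≤ n) (S T : Finset (Fin (2*n)))
    (hS : S.card = 2*k-1) (hT : T.card = 2*(n-k))
    (α : Equiv.Perm (Fin (2*k-1))) (τ : Equiv.Perm (Fin (2*(n-k)))) :
    Fin (2*n) → Fin (2*n) :=
  fun i => if h1 : (i : ℕ) < 2*k-1 then embWord S hS α ⟨i, h1⟩
    else if h2 : (i : ℕ) = 2*k-1 then ⟨2*n-1, by omega⟩
    else embWord T hT τ ⟨(i : ℕ) - 2*k, by have := i.isLt; omega⟩

variable (hk1 : 1 ≤ k) (hkn : k ≤ n) (S T : Finset (Fin (2*n)))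
    (hS : S.card = 2*k-1) (hT : T.card = 2*(n-k))
    (α : Equiv.Perm (Fin (2*k-1))) (τ : Equiv.Perm (Fin (2*(n-k))))

lemma asmF_lt (i : Fin (2*n)) (h1 : (i : ℕ) < 2*k-1) :
    asmF hk1 hkn S T hS hT α τ i = embWord S hS α ⟨i, h1⟩ := by
  simp [asmF, h1]

lemma asmF_eq (i : Fin (2*n)) (h1 : (i : ℕ) = 2*k-1) :
    asmF hk1 hkn S T hS hT α τ i = ⟨2*n-1, by omega⟩ := by
  simp [asmF, h1]

lemma asmF_gt (i : Fin (2*n)) (h1 : 2*k ≤ (i : ℕ)) :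
    asmF hk1 hkn S T hS hT α τ i
      = embWord T hT τ ⟨(i : ℕ) - 2*k, by have := i.isLt; omega⟩ := by
  have h2 : ¬ (i : ℕ) < 2*k-1 := by omega
  have h3 : ¬ (i : ℕ) = 2*k-1 := by omega
  simp [asmF, h2, h3]

lemma asmF_injective (hSsub : S ⊆ univ.erase ⟨2*n-1, by omega⟩)
    (hTdef : T = (univ.erase ⟨2*n-1, by omega⟩) \ S) :
    Injective (asmF hk1 hkn S T hS hT α τ) := by
  have hScap : ∀ x ∈ S, x ∉ T := by
    intro x hx
    rw [hTdef]; simp [hx]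
  have hStop : (⟨2*n-1, by omega⟩ : Fin (2*n)) ∉ S := fun h => by
    have := hSsub h; simp at this
  have hTtop : (⟨2*n-1, by omega⟩ : Fin (2*n)) ∉ T := by
    rw [hTdef]; simp
  intro i j hij
  rcases lt_trichotomy ((i:ℕ)) (2*k-1) with hi | hi | hi <;>
    rcases lt_trichotomy ((j:ℕ)) (2*k-1) with hj | hj | hj
  · rw [asmF_lt _ _ _ _ _ _ _ _ _ hi, asmF_lt _ _ _ _ _ _ _ _ _ hj] at hij
    have := embWord_injective S hS α hij
    exact Fin.ext (congrArg Fin.val this : _)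
  · rw [asmF_lt _ _ _ _ _ _ _ _ _ hi, asmF_eq _ _ _ _ _ _ _ _ _ hj] at hij
    exact absurd (hij ▸ embWord_mem S hS α _) hStop
  · rw [asmF_lt _ _ _ _ _ _ _ _ _ hi, asmF_gt _ _ _ _ _ _ _ _ _ (by omega : 2*k ≤ (j:ℕ))] at hij
    exact absurd (hij ▸ embWord_mem T hT τ _) (hScap _ (embWord_mem S hS α _))
  · rw [asmF_eq _ _ _ _ _ _ _ _ _ hi, asmF_lt _ _ _ _ _ _ _ _ _ hj] at hij
    exact absurd (hij ▸ embWord_mem S hS α _) hStop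
  · exact Fin.ext (hi.trans hj.symm)
  · rw [asmF_eq _ _ _ _ _ _ _ _ _ hi, asmF_gt _ _ _ _ _ _ _ _ _ (by omega : 2*k ≤ (j:ℕ))] at hij
    exact absurd (hij ▸ embWord_mem T hT τ _) hTtop
  · rw [asmF_gt _ _ _ _ _ _ _ _ _ (by omega : 2*k ≤ (i:ℕ))] at hij
    rw [asmF_lt _ _ _ _ _ _ _ _ _ hj] at hij
    exact absurd (hij ▸ embWord_mem T hT τ _) (hScap _ (embWord_mem S hS α _))
  · rw [asmF_gt _ _ _ _ _ _ _ _ _ (by omega : 2*k ≤ (i:ℕ))] at hij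
    rw [asmF_eq _ _ _ _ _ _ _ _ _ hj] at hij
    exact absurd (hij ▸ embWord_mem T hT τ _) hTtop
  · rw [asmF_gt _ _ _ _ _ _ _ _ _ (by omega : 2*k ≤ (i:ℕ))] at hij
    rw [asmF_gt _ _ _ _ _ _ _ _ _ (by omega : 2*k ≤ (j:ℕ))] at hij
    have h4 := embWord_injective T hT τ hij
    have h5 : (i:ℕ) - 2*k = (j:ℕ) - 2*k := congrArg Fin.val h4
    exact Fin.ext (by omega)


variable (hSsub : S ⊆ univ.erase ⟨2*n-1, by omega⟩)
    (hTdef : T = (univ.erase ⟨2*n-1, by omega⟩) \ S)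

/-- The assembled permutation. -/
noncomputable def asmP : Equiv.Perm (Fin (2*n)) :=
  Equiv.ofBijective _
    (Finite.injective_iff_bijective.mp (asmF_injective hk1 hkn S T hS hT α τ hSsub hTdef))

lemma asmP_apply (i : Fin (2*n)) :
    asmP hk1 hkn S T hS hT α τ hSsub hTdef i = asmF hk1 hkn S T hS hT α τ i := rfl

lemma asmP_isUpDown (hα : IsUpDown α) (hτ : IsUpDown τ) :
    IsUpDown (asmP hk1 hkn S T hS hT α τ hSsub hTdef) := by
  intro i h
  simp only [asmP_apply]
  rcases lt_trichotomy ((i:ℕ)+1) (2*k-1) with hc | hc | hc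
  · -- both in prefix
    rw [asmF_lt hk1 hkn S T hS hT α τ i (by omega),
        asmF_lt hk1 hkn S T hS hT α τ ⟨(i:ℕ)+1, h⟩ hc]
    have h2 : ((⟨(i:ℕ), by omega⟩ : Fin (2*k-1)) : ℕ) + 1 < 2*k-1 := hc
    have := hα ⟨(i:ℕ), by omega⟩ h2
    split_ifs with hpar
    · rw [if_pos hpar] at this
      exact (embWord_lt_iff S hS α _ _).mpr this
    · rw [if_neg hpar] at this
      exact (embWord_lt_iff S hS α _ _).mpr this
  · -- i+1 = 2k-1, i even
    have hpar : (i:ℕ) % 2 = 0 := by omega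
    rw [if_pos hpar]
    rw [asmF_lt hk1 hkn S T hS hT α τ i (by omega),
        asmF_eq hk1 hkn S T hS hT α τ ⟨(i:ℕ)+1, h⟩ hc]
    exact mem_S_lt_top (by omega) hSsub (embWord_mem S hS α _)
  · rcases eq_or_lt_of_le (by omega : 2*k-1 ≤ (i:ℕ)) with hc2 | hc2
    · -- i = 2k-1, odd
      have hpar : ¬ (i:ℕ) % 2 = 0 := by omega
      rw [if_neg hpar]
      rw [asmF_eq hk1 hkn S T hS hT α τ i hc2.symm,
          asmF_gt hk1 hkn S T hS hT α τ ⟨(i:ℕ)+1, h⟩ (by show 2*k ≤ (i:ℕ)+1; omega)]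
      exact mem_T_lt_top (by omega) hTdef (embWord_mem T hT τ _)
    · -- both in tail
      rw [asmF_gt hk1 hkn S T hS hT α τ i (by omega),
          asmF_gt hk1 hkn S T hS hT α τ ⟨(i:ℕ)+1, h⟩ (by show 2*k ≤ (i:ℕ)+1; omega)]
      have hi2 := i.isLt
      have h2 : ((⟨(i:ℕ) - 2*k, by omega⟩ : Fin (2*(n-k))) : ℕ) + 1 < 2*(n-k) := by
        simp only []; omega
      have := hτ ⟨(i:ℕ) - 2*k, by omega⟩ h2
      have hidx : (⟨((i:ℕ)+1) - 2*k, by omega⟩ : Fin (2*(n-k)))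
          = ⟨((⟨(i:ℕ) - 2*k, by omega⟩ : Fin (2*(n-k))) : ℕ) + 1, h2⟩ := by
        apply Fin.ext; simp; omega
      rw [hidx]
      have hpar2 : ((⟨(i:ℕ) - 2*k, by omega⟩ : Fin (2*(n-k))) : ℕ) % 2 = (i:ℕ) % 2 := by
        simp only []; omega
      split_ifs with hpar
      · rw [if_pos (by rw [hpar2]; exact hpar)] at this
        exact (embWord_lt_iff T hT τ _ _).mpr this
      · rw [if_neg (by rw [hpar2]; exact hpar)] at this
        exact (embWord_lt_iff T hT τ _ _).mpr this


lemma asmP_top (hlt : 2*k-1 < 2*n) :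
    asmP hk1 hkn S T hS hT α τ hSsub hTdef ⟨2*k-1, hlt⟩ = ⟨2*n-1, by omega⟩ := by
  rw [asmP_apply, asmF_eq hk1 hkn S T hS hT α τ _ rfl]

/-- Cardinality of an initial-segment filter in Fin. -/
lemma card_filter_lt_fin (N a : ℕ) (ha : a ≤ N) :
    (univ.filter (fun i : Fin N => (i : ℕ) < a)).card = a := by
  have : (univ.filter (fun i : Fin N => (i : ℕ) < a))
      = (univ : Finset (Fin a)).map (Fin.castLEEmb ha) := by
    ext x
    simp only [mem_filter, mem_univ, true_and, mem_map, Fin.castLEEmb_apply]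
    constructor
    · intro hx
      exact ⟨⟨(x : ℕ), hx⟩, by apply Fin.ext; simp⟩
    · rintro ⟨j, rfl⟩
      simpa using j.isLt
  rw [this, card_map, card_univ, Fintype.card_fin]

set_option maxHeartbeats 1000000 in
lemma asmP_mmp :
    mmp1000 (asmP hk1 hkn S T hS hT α τ hSsub hTdef) = (2*k-1) + mmp1000 τ := by
  set g := asmP hk1 hkn S T hS hT α τ hSsub hTdef with hg
  have htop : ∀ y : Fin (2*n), ¬ ((⟨2*n-1, by omega⟩ : Fin (2*n)) < y) := by
    intro y hy
    have h1 := y.isLt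
    have h2 : 2*n-1 < (y:ℕ) := hy
    omega
  have key : ∀ i : Fin (2*n), (∃ j : Fin (2*n), i < j ∧ g i < g j) ↔
      ((i : ℕ) < 2*k-1 ∨ ∃ i' j' : Fin (2*(n-k)),
        (i' : ℕ) + 2*k = (i : ℕ) ∧ i' < j' ∧ τ i' < τ j') := by
    intro i
    rcases lt_trichotomy ((i:ℕ)) (2*k-1) with hi | hi | hi
    · simp only [hi, true_or, iff_true]
      refine ⟨⟨2*k-1, by omega⟩, ?_, ?_⟩
      · exact Fin.lt_iff_val_lt_val.mpr hi
      · have h1 : g i = embWord S hS α ⟨(i:ℕ), hi⟩ := by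
          rw [hg, asmP_apply, asmF_lt hk1 hkn S T hS hT α τ i hi]
        have h2 : g ⟨2*k-1, by omega⟩ = ⟨2*n-1, by omega⟩ := by
          rw [hg, asmP_apply, asmF_eq hk1 hkn S T hS hT α τ _ rfl]
        rw [h1, h2]
        exact mem_S_lt_top (by omega) hSsub (embWord_mem S hS α _)
    · constructor
      · rintro ⟨j, hij, hval⟩
        exfalso
        have h1 : g i = ⟨2*n-1, by omega⟩ := by
          rw [hg, asmP_apply, asmF_eq hk1 hkn S T hS hT α τ i hi]
        rw [h1] at hval
        exact htop _ hval
      · rintro (h1 | ⟨i', j', heq, -, -⟩)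
        · omega
        · exfalso
          have := i'.isLt
          omega
    · have h2k : 2*k ≤ (i:ℕ) := by omega
      have hib := i.isLt
      constructor
      · rintro ⟨j, hij, hval⟩
        have hjlt : (i:ℕ) < (j:ℕ) := hij
        have hj2k : 2*k ≤ (j:ℕ) := by omega
        refine Or.inr ⟨⟨(i:ℕ)-2*k, by omega⟩, ⟨(j:ℕ)-2*k, by have := j.isLt; omega⟩,
          by simp only []; omega, Fin.mk_lt_mk.mpr (by omega), ?_⟩
        rw [hg, asmP_apply, asmP_apply, asmF_gt hk1 hkn S T hS hT α τ i h2k,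
          asmF_gt hk1 hkn S T hS hT α τ j hj2k] at hval
        exact (embWord_lt_iff T hT τ _ _).mp hval
      · rintro (h1 | ⟨i', j', heq, hij', hval'⟩)
        · omega
        · have hjb := j'.isLt
          refine ⟨⟨(j':ℕ)+2*k, by omega⟩, ?_, ?_⟩
          · have := Fin.lt_iff_val_lt_val.mp hij'
            exact Fin.lt_iff_val_lt_val.mpr (by simp only []; omega)
          · rw [hg, asmP_apply, asmP_apply, asmF_gt hk1 hkn S T hS hT α τ i h2k,
              asmF_gt hk1 hkn S T hS hT α τ _ (by simp only []; omega)]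
            apply (embWord_lt_iff T hT τ _ _).mpr
            have e1 : (⟨((i:ℕ)) - 2*k, by omega⟩ : Fin (2*(n-k))) = i' := by
              apply Fin.ext; simp only []; omega
            have e2 : (⟨((⟨(j':ℕ)+2*k, by omega⟩ : Fin (2*n)) : ℕ) - 2*k, by simp only []; omega⟩
                : Fin (2*(n-k))) = j' := by
              apply Fin.ext; simp only []; omega
            rw [e1, e2]
            exact hval'
  unfold mmp1000
  have hsplit : (univ.filter (fun i : Fin (2*n) => ∃ j : Fin (2*n), i < j ∧ g i < g j))
      = (univ.filter (fun i : Fin (2*n) => (i:ℕ) < 2*k-1))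
        ∪ (univ.filter (fun i : Fin (2*(n-k)) => ∃ j' : Fin (2*(n-k)), i < j' ∧ τ i < τ j')).image
            (fun j : Fin (2*(n-k)) => (⟨(j:ℕ)+2*k, by have := j.isLt; omega⟩ : Fin (2*n))) := by
    ext i
    simp only [mem_filter, mem_univ, true_and, mem_union, mem_image]
    rw [key i]
    constructor
    · rintro (h1 | ⟨i', j', heq, hij', hval'⟩)
      · exact Or.inl h1
      · refine Or.inr ⟨i', ⟨j', hij', hval'⟩, ?_⟩
        apply Fin.ext
        exact heq
    · rintro (h1 | ⟨j0, ⟨j', hij', hval'⟩, rfl⟩)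
      · exact Or.inl h1
      · exact Or.inr ⟨j0, j', rfl, hij', hval'⟩
  rw [hsplit, card_union_of_disjoint, card_filter_lt_fin _ _ (by omega),
    Finset.card_image_of_injective]
  · intro a b hab
    have h1 : (a:ℕ) + 2*k = (b:ℕ) + 2*k := congrArg Fin.val hab
    exact Fin.ext (by omega)
  · rw [Finset.disjoint_left]
    intro x hx hx2
    simp only [mem_filter, mem_univ, true_and] at hx
    rw [mem_image] at hx2
    obtain ⟨j0, -, rfl⟩ := hx2
    have : (j0:ℕ) + 2*k < 2*k-1 := hx
    omega

end Assemble

section Disassemble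

/-- The prefix word of σ. -/
def prefW {n k : ℕ} (hk1 : 1 ≤ k) (hkn : k ≤ n) (σ : Equiv.Perm (Fin (2*n)))
    (i : Fin (2*k-1)) : Fin (2*n) :=
  σ ⟨(i:ℕ), by have := i.isLt; omega⟩

/-- The tail word of σ. -/
def tailW {n k : ℕ} (hk1 : 1 ≤ k) (hkn : k ≤ n) (σ : Equiv.Perm (Fin (2*n)))
    (i : Fin (2*(n-k))) : Fin (2*n) :=
  σ ⟨(i:ℕ)+2*k, by have := i.isLt; omega⟩

lemma prefW_inj {n k : ℕ} (hk1 : 1 ≤ k) (hkn : k ≤ n) (σ : Equiv.Perm (Fin (2*n))) :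
    Function.Injective (prefW hk1 hkn σ) := by
  intro i j h
  have := σ.injective h
  have := congrArg Fin.val this
  exact Fin.ext this

lemma tailW_inj {n k : ℕ} (hk1 : 1 ≤ k) (hkn : k ≤ n) (σ : Equiv.Perm (Fin (2*n))) :
    Function.Injective (tailW hk1 hkn σ) := by
  intro i j h
  have := σ.injective h
  have h2 : (i:ℕ)+2*k = (j:ℕ)+2*k := congrArg Fin.val this
  exact Fin.ext (by omega)

/-- The set of prefix values of σ. -/
noncomputable def Sof {n k : ℕ} (hk1 : 1 ≤ k) (hkn : k ≤ n) (σ : Equiv.Perm (Fin (2*n))) :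
    Finset (Fin (2*n)) :=
  Finset.univ.image (prefW hk1 hkn σ)

lemma Sof_card {n k : ℕ} (hk1 : 1 ≤ k) (hkn : k ≤ n) (σ : Equiv.Perm (Fin (2*n))) :
    (Sof hk1 hkn σ).card = 2*k-1 := by
  rw [Sof, Finset.card_image_of_injective _ (prefW_inj hk1 hkn σ), card_univ, Fintype.card_fin]

/-- The prefix pattern of σ. -/
noncomputable def αof {n k : ℕ} (hk1 : 1 ≤ k) (hkn : k ≤ n) (σ : Equiv.Perm (Fin (2*n))) :
    Equiv.Perm (Fin (2*k-1)) :=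
  stdPerm (prefW hk1 hkn σ) (prefW_inj hk1 hkn σ)

/-- The tail pattern of σ. -/
noncomputable def τof {n k : ℕ} (hk1 : 1 ≤ k) (hkn : k ≤ n) (σ : Equiv.Perm (Fin (2*n))) :
    Equiv.Perm (Fin (2*(n-k))) :=
  stdPerm (tailW hk1 hkn σ) (tailW_inj hk1 hkn σ)

lemma Sof_subset {n k : ℕ} (hk1 : 1 ≤ k) (hkn : k ≤ n) (σ : Equiv.Perm (Fin (2*n)))
    (hσ : σ ⟨2*k-1, by omega⟩ = ⟨2*n-1, by omega⟩) :
    Sof hk1 hkn σ ⊆ univ.erase ⟨2*n-1, by omega⟩ := by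
  intro x hx
  rw [Sof, mem_image] at hx
  obtain ⟨i, -, rfl⟩ := hx
  rw [mem_erase]
  refine ⟨?_, mem_univ _⟩
  rw [← hσ]
  intro h
  have h2 := σ.injective h
  have h3 : (i:ℕ) = 2*k-1 := congrArg Fin.val h2
  have := i.isLt
  omega

lemma tailW_mem_T {n k : ℕ} (hk1 : 1 ≤ k) (hkn : k ≤ n) (σ : Equiv.Perm (Fin (2*n)))
    (hσ : σ ⟨2*k-1, by omega⟩ = ⟨2*n-1, by omega⟩) (i : Fin (2*(n-k))) :
    tailW hk1 hkn σ i ∈ (univ.erase ⟨2*n-1, by omega⟩) \ (Sof hk1 hkn σ) := by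
  rw [mem_sdiff, mem_erase]
  refine ⟨⟨?_, mem_univ _⟩, ?_⟩
  · rw [← hσ]
    intro h
    have h2 := σ.injective h
    have h3 : (i:ℕ)+2*k = 2*k-1 := congrArg Fin.val h2
    omega
  · rw [Sof, mem_image]
    rintro ⟨j, -, hj⟩
    have h2 := σ.injective hj
    have h3 : (j:ℕ) = (i:ℕ)+2*k := congrArg Fin.val h2
    have := j.isLt
    omega

lemma αof_isUpDown {n k : ℕ} (hk1 : 1 ≤ k) (hkn : k ≤ n) (σ : Equiv.Perm (Fin (2*n)))
    (hσUD : IsUpDown σ) : IsUpDown (αof hk1 hkn σ) := by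
  intro i h
  have hib := i.isLt
  have pfa : (i:ℕ) < 2*n := by omega
  have pf2 : ((⟨(i:ℕ), pfa⟩ : Fin (2*n)) : ℕ) + 1 < 2*n := by show (i:ℕ)+1 < 2*n; omega
  have hud := hσUD ⟨(i:ℕ), pfa⟩ pf2
  split_ifs with hpar
  · rw [if_pos (hpar : ((⟨(i:ℕ), pfa⟩ : Fin (2*n)) : ℕ) % 2 = 0)] at hud
    exact (stdPerm_lt_iff (prefW hk1 hkn σ) (prefW_inj hk1 hkn σ) i ⟨(i:ℕ)+1, h⟩).mpr hud
  · rw [if_neg (hpar : ¬ ((⟨(i:ℕ), pfa⟩ : Fin (2*n)) : ℕ) % 2 = 0)] at hud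
    exact (stdPerm_lt_iff (prefW hk1 hkn σ) (prefW_inj hk1 hkn σ) ⟨(i:ℕ)+1, h⟩ i).mpr hud

lemma τof_isUpDown {n k : ℕ} (hk1 : 1 ≤ k) (hkn : k ≤ n) (σ : Equiv.Perm (Fin (2*n)))
    (hσUD : IsUpDown σ) : IsUpDown (τof hk1 hkn σ) := by
  intro i h
  have hib := i.isLt
  have pfa : (i:ℕ)+2*k < 2*n := by omega
  have pf2 : ((⟨(i:ℕ)+2*k, pfa⟩ : Fin (2*n)) : ℕ) + 1 < 2*n := by
    show (i:ℕ)+2*k+1 < 2*n; omega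
  have hud := hσUD ⟨(i:ℕ)+2*k, pfa⟩ pf2
  have eidx : (⟨((⟨(i:ℕ)+2*k, pfa⟩ : Fin (2*n)) : ℕ)+1, pf2⟩ : Fin (2*n))
      = ⟨(i:ℕ)+1+2*k, by omega⟩ := Fin.ext (show (i:ℕ)+2*k+1 = (i:ℕ)+1+2*k by omega)
  rw [eidx] at hud
  have hpar2 : ((i:ℕ)+2*k) % 2 = (i:ℕ)%2 := by omega
  split_ifs with hpar
  · rw [if_pos (show ((⟨(i:ℕ)+2*k, pfa⟩ : Fin (2*n)) : ℕ) % 2 = 0 by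
      show ((i:ℕ)+2*k) % 2 = 0; omega)] at hud
    exact (stdPerm_lt_iff (tailW hk1 hkn σ) (tailW_inj hk1 hkn σ) i ⟨(i:ℕ)+1, h⟩).mpr hud
  · rw [if_neg (show ¬ ((⟨(i:ℕ)+2*k, pfa⟩ : Fin (2*n)) : ℕ) % 2 = 0 by
      show ¬ ((i:ℕ)+2*k) % 2 = 0; omega)] at hud
    exact (stdPerm_lt_iff (tailW hk1 hkn σ) (tailW_inj hk1 hkn σ) ⟨(i:ℕ)+1, h⟩ i).mpr hud

end Disassemble

open scoped Classical in
set_option maxHeartbeats 1000000 in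
lemma fiber_sum {n k : ℕ} (hk1 : 1 ≤ k) (hkn : k ≤ n) (x : ℤ) :
    ∑ σ ∈ (UDset (2*n)).filter
        (fun σ => σ ⟨2*k-1, by omega⟩ = (⟨2*n-1, by omega⟩ : Fin (2*n))), x ^ mmp1000 σ
      = (Nat.choose (2*n-1) (2*k-1) : ℤ) * (udCount (2*k-1) : ℤ) * x ^ (2*k-1)
        * Apoly (n-k) x := by
  classical
  have step : ∑ σ ∈ (UDset (2*n)).filter
        (fun σ => σ ⟨2*k-1, by omega⟩ = (⟨2*n-1, by omega⟩ : Fin (2*n))), x ^ mmp1000 σ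
      = ∑ p ∈ (powersetCard (2*k-1) (univ.erase (⟨2*n-1, by omega⟩ : Fin (2*n))))
          ×ˢ ((UDset (2*k-1)) ×ˢ (UDset (2*(n-k)))),
          x ^ (2*k-1 + mmp1000 p.2.2) := by
    have hpS : ∀ p : Finset (Fin (2*n))
        × (Equiv.Perm (Fin (2*k-1)) × Equiv.Perm (Fin (2*(n-k)))),
        p ∈ (powersetCard (2*k-1) (univ.erase (⟨2*n-1, by omega⟩ : Fin (2*n))))
          ×ˢ ((UDset (2*k-1)) ×ˢ (UDset (2*(n-k)))) →
        (p.1 ⊆ univ.erase (⟨2*n-1, by omega⟩ : Fin (2*n)) ∧ p.1.card = 2*k-1)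
          ∧ IsUpDown p.2.1 ∧ IsUpDown p.2.2 := by
      intro p hp
      rw [mem_product] at hp
      obtain ⟨hp1, hp2⟩ := hp
      rw [mem_product] at hp2
      refine ⟨mem_powersetCard.mp hp1, ?_, ?_⟩
      · exact (mem_filter.mp hp2.1).2
      · exact (mem_filter.mp hp2.2).2
    have hpT : ∀ p : Finset (Fin (2*n))
        × (Equiv.Perm (Fin (2*k-1)) × Equiv.Perm (Fin (2*(n-k)))),
        p ∈ (powersetCard (2*k-1) (univ.erase (⟨2*n-1, by omega⟩ : Fin (2*n))))
          ×ˢ ((UDset (2*k-1)) ×ˢ (UDset (2*(n-k)))) →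
        ((univ.erase (⟨2*n-1, by omega⟩ : Fin (2*n))) \ p.1).card = 2*(n-k) := by
      intro p hp
      rw [card_sdiff_of_subset (hpS p hp).1.1, card_erase_of_mem (mem_univ _), card_univ,
        Fintype.card_fin, (hpS p hp).1.2]
      omega
    have hfibUD : ∀ σ ∈ (UDset (2*n)).filter
        (fun σ => σ ⟨2*k-1, by omega⟩ = (⟨2*n-1, by omega⟩ : Fin (2*n))),
        IsUpDown σ ∧ σ ⟨2*k-1, by omega⟩ = (⟨2*n-1, by omega⟩ : Fin (2*n)) := by
      intro σ hσ
      have h1 := mem_filter.mp hσ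
      exact ⟨(mem_filter.mp h1.1).2, h1.2⟩
    have hleft : ∀ σ ∈ (UDset (2*n)).filter
        (fun σ => σ ⟨2*k-1, by omega⟩ = (⟨2*n-1, by omega⟩ : Fin (2*n))),
        ∀ (hS : (Sof hk1 hkn σ).card = 2*k-1)
          (hT : ((univ.erase (⟨2*n-1, by omega⟩ : Fin (2*n))) \ (Sof hk1 hkn σ)).card
            = 2*(n-k))
          (hSsub : Sof hk1 hkn σ ⊆ univ.erase (⟨2*n-1, by omega⟩ : Fin (2*n)))
          (hTdef : (univ.erase (⟨2*n-1, by omega⟩ : Fin (2*n))) \ (Sof hk1 hkn σ)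
            = (univ.erase (⟨2*n-1, by omega⟩ : Fin (2*n))) \ (Sof hk1 hkn σ)),
        asmP hk1 hkn (Sof hk1 hkn σ)
            ((univ.erase (⟨2*n-1, by omega⟩ : Fin (2*n))) \ (Sof hk1 hkn σ))
            hS hT (αof hk1 hkn σ) (τof hk1 hkn σ) hSsub hTdef = σ := by
      intro σ hσ hS hT hSsub hTdef
      have hσtop := (hfibUD σ hσ).2
      apply Equiv.ext
      intro i0
      have hi0 := i0.isLt
      rcases lt_trichotomy ((i0:ℕ)) (2*k-1) with hc | hc | hc
      · rw [asmP_apply, asmF_lt hk1 hkn _ _ hS hT _ _ i0 hc]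
        exact congrFun (embWord_stdPerm (Sof hk1 hkn σ) hS (prefW hk1 hkn σ)
          (prefW_inj hk1 hkn σ) (fun j => mem_image_of_mem _ (mem_univ j))) ⟨(i0:ℕ), hc⟩
      · rw [asmP_apply, asmF_eq hk1 hkn _ _ hS hT _ _ i0 hc, ← hσtop]
        exact congrArg σ (Fin.ext hc.symm)
      · rw [asmP_apply, asmF_gt hk1 hkn _ _ hS hT _ _ i0 (by omega)]
        refine (congrFun (embWord_stdPerm _ hT (tailW hk1 hkn σ)
          (tailW_inj hk1 hkn σ) ?_) ⟨(i0:ℕ)-2*k, by omega⟩).trans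
          (congrArg σ (Fin.ext (show ((i0:ℕ)-2*k)+2*k = (i0:ℕ) by omega)))
        intro j
        rw [hTdef]
        exact tailW_mem_T hk1 hkn σ hσtop j
    refine Finset.sum_bij'
      (fun σ _ => (Sof hk1 hkn σ, (αof hk1 hkn σ, τof hk1 hkn σ)))
      (fun p hp => asmP hk1 hkn p.1
        ((univ.erase (⟨2*n-1, by omega⟩ : Fin (2*n))) \ p.1)
        (hpS p hp).1.2 (hpT p hp) p.2.1 p.2.2 (hpS p hp).1.1 rfl)
      ?_ ?_ ?_ ?_ ?_
    · intro σ hσ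
      rw [mem_product]
      refine ⟨?_, ?_⟩
      · rw [mem_powersetCard]
        exact ⟨Sof_subset hk1 hkn σ (hfibUD σ hσ).2, Sof_card hk1 hkn σ⟩
      · rw [mem_product]
        exact ⟨mem_filter.mpr ⟨mem_univ _, αof_isUpDown hk1 hkn σ (hfibUD σ hσ).1⟩,
          mem_filter.mpr ⟨mem_univ _, τof_isUpDown hk1 hkn σ (hfibUD σ hσ).1⟩⟩
    · intro p hp
      rw [mem_filter]
      refine ⟨mem_filter.mpr ⟨mem_univ _, asmP_isUpDown hk1 hkn p.1 _ _ _ p.2.1 p.2.2 _ rfl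
        (hpS p hp).2.1 (hpS p hp).2.2⟩, ?_⟩
      exact asmP_top hk1 hkn p.1 _ _ _ p.2.1 p.2.2 _ rfl (by omega)
    · intro σ hσ
      exact hleft σ hσ _ _ _ _
    · intro p hp
      obtain ⟨S0, α0, τ0⟩ := p
      have hw : prefW hk1 hkn (asmP hk1 hkn S0
          ((univ.erase (⟨2*n-1, by omega⟩ : Fin (2*n))) \ S0)
          (hpS (S0, (α0, τ0)) hp).1.2 (hpT (S0, (α0, τ0)) hp) α0 τ0 (hpS (S0, (α0, τ0)) hp).1.1 rfl)
          = embWord S0 (hpS (S0, (α0, τ0)) hp).1.2 α0 := by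
        funext j
        exact asmF_lt hk1 hkn S0 _ (hpS (S0, (α0, τ0)) hp).1.2 (hpT (S0, (α0, τ0)) hp) α0 τ0
          ⟨(j:ℕ), by have := j.isLt; omega⟩ j.isLt
      have hw2 : tailW hk1 hkn (asmP hk1 hkn S0
          ((univ.erase (⟨2*n-1, by omega⟩ : Fin (2*n))) \ S0)
          (hpS (S0, (α0, τ0)) hp).1.2 (hpT (S0, (α0, τ0)) hp) α0 τ0 (hpS (S0, (α0, τ0)) hp).1.1 rfl)
          = embWord _ (hpT (S0, (α0, τ0)) hp) τ0 := by
        funext j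
        have hjb := j.isLt
        refine (asmF_gt hk1 hkn S0 _ (hpS (S0, (α0, τ0)) hp).1.2 (hpT (S0, (α0, τ0)) hp) α0 τ0
          ⟨(j:ℕ)+2*k, by omega⟩ (by show 2*k ≤ (j:ℕ)+2*k; omega)).trans ?_
        exact congrArg _ (Fin.ext (show ((j:ℕ)+2*k)-2*k = (j:ℕ) by omega))
      simp only [Prod.mk.injEq]
      refine ⟨?_, ?_, ?_⟩
      · rw [Sof, hw, embWord_image]
      · refine stdPerm_eq_of_lt_iff _ _ α0 (fun i j => ?_)
        rw [hw]
        exact (embWord_lt_iff S0 (hpS (S0, (α0, τ0)) hp).1.2 α0 i j).symm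
      · refine stdPerm_eq_of_lt_iff _ _ τ0 (fun i j => ?_)
        rw [hw2]
        exact (embWord_lt_iff _ (hpT (S0, (α0, τ0)) hp) τ0 i j).symm
    · intro σ hσ
      congr 1
      conv_lhs => rw [← hleft σ hσ (Sof_card hk1 hkn σ)
        (by rw [card_sdiff_of_subset (Sof_subset hk1 hkn σ (hfibUD σ hσ).2),
              card_erase_of_mem (mem_univ _), card_univ, Fintype.card_fin,
              Sof_card hk1 hkn σ]; omega)
        (Sof_subset hk1 hkn σ (hfibUD σ hσ).2) rfl]
      exact asmP_mmp hk1 hkn _ _ _ _ _ _ _ rfl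
  rw [step, Finset.sum_product]
  have hinner : ∑ q ∈ (UDset (2*k-1)) ×ˢ (UDset (2*(n-k))), x ^ (2*k-1 + mmp1000 q.2)
      = (udCount (2*k-1) : ℤ) * (x ^ (2*k-1) * Apoly (n-k) x) := by
    rw [Finset.sum_product]
    simp only []
    rw [Finset.sum_const, nsmul_eq_mul]
    congr 1
    rw [Apoly, Finset.mul_sum]
    refine Finset.sum_congr rfl (fun τ _ => ?_)
    rw [pow_add]
  calc ∑ S ∈ powersetCard (2*k-1) (univ.erase (⟨2*n-1, by omega⟩ : Fin (2*n))),
        ∑ q ∈ (UDset (2*k-1)) ×ˢ (UDset (2*(n-k))), x ^ (2*k-1 + mmp1000 q.2)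
      = ∑ _S ∈ powersetCard (2*k-1) (univ.erase (⟨2*n-1, by omega⟩ : Fin (2*n))),
        (udCount (2*k-1) : ℤ) * (x ^ (2*k-1) * Apoly (n-k) x) :=
      Finset.sum_congr rfl (fun S _ => hinner)
    _ = ((powersetCard (2*k-1) (univ.erase (⟨2*n-1, by omega⟩ : Fin (2*n)))).card : ℤ)
        * ((udCount (2*k-1) : ℤ) * (x ^ (2*k-1) * Apoly (n-k) x)) := by
      rw [Finset.sum_const, nsmul_eq_mul]
    _ = (Nat.choose (2*n-1) (2*k-1) : ℤ) * (udCount (2*k-1) : ℤ) * x ^ (2*k-1)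
        * Apoly (n-k) x := by
      rw [Finset.card_powersetCard, card_erase_of_mem (mem_univ _), card_univ,
        Fintype.card_fin]
      ring

open scoped Classical in
theorem stmt3 (n : ℕ) (hn : 1 ≤ n) (x : ℤ) :
    Apoly n x = ∑ k ∈ Finset.Icc 1 n,
      (Nat.choose (2 * n - 1) (2 * k - 1) : ℤ) * (udCount (2 * k - 1) : ℤ) *
        x ^ (2 * k - 1) * Apoly (n - k) x := by
  classical
  have hodd : ∀ σ ∈ UDset (2*n),
      ((σ.symm (⟨2*n-1, by omega⟩ : Fin (2*n))) : ℕ) % 2 = 1 := by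
    intro σ hσ
    have hσUD : IsUpDown σ := (mem_filter.mp hσ).2
    set p := σ.symm (⟨2*n-1, by omega⟩ : Fin (2*n)) with hp
    have hap : σ p = ⟨2*n-1, by omega⟩ := Equiv.apply_symm_apply σ _
    by_contra hcon
    have hpar : (p : ℕ) % 2 = 0 := by omega
    have hpb := p.isLt
    have hlt : (p : ℕ) + 1 < 2*n := by omega
    have := hσUD p hlt
    rw [if_pos hpar, hap] at this
    have h2 : 2*n-1 < ((σ ⟨(p:ℕ)+1, hlt⟩ : Fin (2*n)) : ℕ) := this
    have := (σ ⟨(p:ℕ)+1, hlt⟩).isLt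
    omega
  have hmaps : ∀ σ ∈ UDset (2*n),
      (((σ.symm (⟨2*n-1, by omega⟩ : Fin (2*n))) : ℕ) + 1) / 2 ∈ Finset.Icc 1 n := by
    intro σ hσ
    have h1 := hodd σ hσ
    have h2 := (σ.symm (⟨2*n-1, by omega⟩ : Fin (2*n))).isLt
    rw [mem_Icc]
    omega
  rw [Apoly, ← Finset.sum_fiberwise_of_maps_to hmaps (fun σ => x ^ mmp1000 σ)]
  refine Finset.sum_congr rfl (fun k hk => ?_)
  rw [mem_Icc] at hk
  obtain ⟨hk1, hkn⟩ := hk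
  have hfil : (UDset (2*n)).filter
        (fun σ => (((σ.symm (⟨2*n-1, by omega⟩ : Fin (2*n))) : ℕ) + 1) / 2 = k)
      = (UDset (2*n)).filter
        (fun σ => σ ⟨2*k-1, by omega⟩ = (⟨2*n-1, by omega⟩ : Fin (2*n))) := by
    ext σ
    simp only [mem_filter]
    refine and_congr_right (fun hσ => ?_)
    have h1 := hodd σ hσ
    have h2 := (σ.symm (⟨2*n-1, by omega⟩ : Fin (2*n))).isLt
    constructor
    · intro h3
      have h4 : ((σ.symm (⟨2*n-1, by omega⟩ : Fin (2*n))) : ℕ) = 2*k-1 := by omega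
      have h5 : σ.symm (⟨2*n-1, by omega⟩ : Fin (2*n)) = ⟨2*k-1, by omega⟩ :=
        Fin.ext h4
      rw [← h5, Equiv.apply_symm_apply]
    · intro h3
      have h5 : σ.symm (⟨2*n-1, by omega⟩ : Fin (2*n)) = ⟨2*k-1, by omega⟩ := by
        rw [← h3, Equiv.symm_apply_apply]
      rw [h5]
      show (2*k-1+1)/2 = k
      omega
  rw [hfil]
  exact fiber_sum hk1 hkn x
end

section
/- For all n ≥ 1, the polynomial D_{2n+1}(x) = Σ_{σ ∈ DU_{2n+1}} x^{mmp^{(1,0,0,0)}(σ)} satisfies D_{2n+1}(x) = Σ_{k=0}^{n} C(2n, 2k) · A_{2k}(1) · x^{2k} · A_{2n-2k}(x), where A_{2k}(x) = Σ_{σ ∈ UD_{2k}} x^{mmp^{(1,0,0,0)}(σ)}, A_0(x) = 1, and A_{2k}(1) = |UD_{2k}|. -/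
open Finset

section Aux

open Finset

lemma card_filter_val_lt (q m : ℕ) (h : m ≤ q) :
    ((Finset.univ : Finset (Fin q)).filter (fun i : Fin q => (i : ℕ) < m)).card = m := by
  have himg : (Finset.univ : Finset (Fin q)).filter (fun i : Fin q => (i : ℕ) < m)
      = (Finset.univ : Finset (Fin m)).image (Fin.castLE h) := by
    ext i
    simp only [Finset.mem_filter, Finset.mem_univ, true_and, Finset.mem_image]
    constructor
    · intro hi; exact ⟨⟨i, hi⟩, rfl⟩
    · rintro ⟨j, rfl⟩; exact j.isLt
  rw [himg, Finset.card_image_of_injective _ (Fin.castLE_injective h), Finset.card_univ,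
    Fintype.card_fin]

lemma iso_coe_lt_iff {q c : ℕ} (S : Finset (Fin q)) (hS : S.card = c) (a b : Fin c) :
    ((S.orderIsoOfFin hS a : Fin q)) < (S.orderIsoOfFin hS b : Fin q) ↔ a < b := by
  rw [Subtype.coe_lt_coe, OrderIso.lt_iff_lt]

lemma isUpDown_iff_complement {q : ℕ} (σ : Equiv.Perm (Fin q)) :
    IsUpDown σ ↔ IsDownUp (σ.trans Fin.revPerm) := by
  refine forall_congr' fun i => forall_congr' fun hi => ?_
  by_cases hp : (i : ℕ) % 2 = 0 <;> simp [hp, Fin.rev_lt_rev, Equiv.trans_apply]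

lemma duCount_eq_udCount (m : ℕ) : duCount m = udCount m := by
  classical
  unfold duCount udCount
  refine (Finset.card_bij' (fun σ _ => σ.trans Fin.revPerm) (fun σ _ => σ.trans Fin.revPerm)
    ?_ ?_ ?_ ?_).symm
  · intro σ hσ
    simp only [UDset, Finset.mem_filter, Finset.mem_univ, true_and] at hσ
    simp only [DUset, Finset.mem_filter, Finset.mem_univ, true_and]
    exact (isUpDown_iff_complement σ).mp hσ
  · intro σ hσ
    simp only [DUset, Finset.mem_filter, Finset.mem_univ, true_and] at hσ
    simp only [UDset, Finset.mem_filter, Finset.mem_univ, true_and]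
    rw [isUpDown_iff_complement]
    have : (σ.trans Fin.revPerm).trans Fin.revPerm = σ := by
      ext i; simp [Equiv.trans_apply]
    rwa [this]
  · intro σ _; ext i; simp [Equiv.trans_apply]
  · intro σ _; ext i; simp [Equiv.trans_apply]

lemma symm_last_even {q : ℕ} (σ : Equiv.Perm (Fin (q + 1))) (h : IsDownUp σ) :
    ((σ.symm (Fin.last q) : Fin (q + 1)) : ℕ) % 2 = 0 := by
  by_contra hodd
  set p := σ.symm (Fin.last q) with hp
  have hp1 : 1 ≤ (p : ℕ) := by omega
  have hplt : (p : ℕ) < q + 1 := p.isLt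
  have hlt : ((⟨(p : ℕ) - 1, by omega⟩ : Fin (q + 1)) : ℕ) + 1 < q + 1 := by
    simp only []; omega
  have hcond := h ⟨(p : ℕ) - 1, by omega⟩ hlt
  rw [if_pos (by simp only []; omega)] at hcond
  have hpp : (⟨((⟨(p : ℕ) - 1, by omega⟩ : Fin (q + 1)) : ℕ) + 1, hlt⟩ : Fin (q + 1)) = p :=
    Fin.ext (by simp only []; omega)
  rw [hpp] at hcond
  have hσp : σ p = Fin.last q := σ.apply_symm_apply _
  rw [hσp] at hcond
  exact absurd (Fin.le_last (σ ⟨(p : ℕ) - 1, by omega⟩)) (not_le.mpr hcond)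

end Aux
section Psi

open Finset

lemma card_compl_eq {m r : ℕ} (S : Finset (Fin (m + r))) (hS : S.card = m) : Sᶜ.card = r := by
  rw [Finset.card_compl, hS, Fintype.card_fin]; omega

noncomputable def psiFun (m r : ℕ) (S : Finset (Fin (m + r))) (hS : S.card = m)
    (α : Equiv.Perm (Fin m)) (β : Equiv.Perm (Fin r)) (i : Fin (m + r + 1)) : Fin (m + r + 1) :=
  if h : (i : ℕ) < m then
    Fin.castSucc ((S.orderIsoOfFin hS (α ⟨i, h⟩) : Fin (m + r)))
  else if h2 : (i : ℕ) = m then Fin.last (m + r)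
  else Fin.castSucc ((Sᶜ.orderIsoOfFin (card_compl_eq S hS)
    (β ⟨(i : ℕ) - (m + 1), by have := i.isLt; omega⟩) : Fin (m + r)))

lemma psiFun_apply_lt (m r : ℕ) (S : Finset (Fin (m + r))) (hS : S.card = m)
    (α : Equiv.Perm (Fin m)) (β : Equiv.Perm (Fin r)) (i : Fin (m + r + 1)) (h : (i : ℕ) < m) :
    psiFun m r S hS α β i = Fin.castSucc ((S.orderIsoOfFin hS (α ⟨i, h⟩) : Fin (m + r))) := by
  rw [psiFun, dif_pos h]

lemma psiFun_apply_eq (m r : ℕ) (S : Finset (Fin (m + r))) (hS : S.card = m)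
    (α : Equiv.Perm (Fin m)) (β : Equiv.Perm (Fin r)) (i : Fin (m + r + 1)) (h : (i : ℕ) = m) :
    psiFun m r S hS α β i = Fin.last (m + r) := by
  rw [psiFun, dif_neg (by omega), dif_pos h]

lemma psiFun_apply_gt (m r : ℕ) (S : Finset (Fin (m + r))) (hS : S.card = m)
    (α : Equiv.Perm (Fin m)) (β : Equiv.Perm (Fin r)) (i : Fin (m + r + 1)) (h : m < (i : ℕ)) :
    psiFun m r S hS α β i = Fin.castSucc ((Sᶜ.orderIsoOfFin (card_compl_eq S hS)
      (β ⟨(i : ℕ) - (m + 1), by have := i.isLt; omega⟩) : Fin (m + r))) := by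
  rw [psiFun, dif_neg (by omega), dif_neg (by omega)]

lemma psiFun_injective (m r : ℕ) (S : Finset (Fin (m + r))) (hS : S.card = m)
    (α : Equiv.Perm (Fin m)) (β : Equiv.Perm (Fin r)) :
    Function.Injective (psiFun m r S hS α β) := by
  intro a b hab
  by_cases ha : (a : ℕ) < m <;> by_cases hb : (b : ℕ) < m
  · rw [psiFun_apply_lt m r S hS α β a ha, psiFun_apply_lt m r S hS α β b hb] at hab
    have h1 := Subtype.coe_injective (Fin.castSucc_injective _ hab)
    have h2 := α.injective ((S.orderIsoOfFin hS).injective h1)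
    simp only [Fin.mk.injEq] at h2
    exact Fin.ext h2
  · by_cases hb2 : (b : ℕ) = m
    · rw [psiFun_apply_lt m r S hS α β a ha, psiFun_apply_eq m r S hS α β b hb2] at hab
      exact absurd hab (Fin.castSucc_lt_last _).ne
    · rw [psiFun_apply_lt m r S hS α β a ha,
        psiFun_apply_gt m r S hS α β b (by omega)] at hab
      have h1 := Fin.castSucc_injective _ hab
      have hmem1 := (S.orderIsoOfFin hS (α ⟨a, ha⟩)).2
      have hmem2 := (Sᶜ.orderIsoOfFin (card_compl_eq S hS)
        (β ⟨(b : ℕ) - (m + 1), by have := b.isLt; omega⟩)).2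
      rw [h1] at hmem1
      rw [Finset.mem_compl] at hmem2
      exact absurd hmem1 hmem2
  · by_cases ha2 : (a : ℕ) = m
    · rw [psiFun_apply_eq m r S hS α β a ha2, psiFun_apply_lt m r S hS α β b hb] at hab
      exact absurd hab.symm (Fin.castSucc_lt_last _).ne
    · rw [psiFun_apply_gt m r S hS α β a (by omega),
        psiFun_apply_lt m r S hS α β b hb] at hab
      have h1 := Fin.castSucc_injective _ hab
      have hmem1 := (S.orderIsoOfFin hS (α ⟨b, hb⟩)).2
      have hmem2 := (Sᶜ.orderIsoOfFin (card_compl_eq S hS)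
        (β ⟨(a : ℕ) - (m + 1), by have := a.isLt; omega⟩)).2
      rw [← h1] at hmem1
      rw [Finset.mem_compl] at hmem2
      exact absurd hmem1 hmem2
  · by_cases ha2 : (a : ℕ) = m <;> by_cases hb2 : (b : ℕ) = m
    · exact Fin.ext (by omega)
    · rw [psiFun_apply_eq m r S hS α β a ha2,
        psiFun_apply_gt m r S hS α β b (by omega)] at hab
      exact absurd hab.symm (Fin.castSucc_lt_last _).ne
    · rw [psiFun_apply_gt m r S hS α β a (by omega),
        psiFun_apply_eq m r S hS α β b hb2] at hab
      exact absurd hab (Fin.castSucc_lt_last _).ne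
    · rw [psiFun_apply_gt m r S hS α β a (by omega),
        psiFun_apply_gt m r S hS α β b (by omega)] at hab
      have h1 := Fin.castSucc_injective _ hab
      have h2 := β.injective ((Sᶜ.orderIsoOfFin (card_compl_eq S hS)).injective
        (Subtype.coe_injective h1))
      have h3 : (a : ℕ) - (m + 1) = (b : ℕ) - (m + 1) := congrArg Fin.val h2
      exact Fin.ext (by omega)

noncomputable def psiPerm (m r : ℕ) (S : Finset (Fin (m + r))) (hS : S.card = m)
    (α : Equiv.Perm (Fin m)) (β : Equiv.Perm (Fin r)) : Equiv.Perm (Fin (m + r + 1)) :=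
  Equiv.ofBijective _ (Finite.injective_iff_bijective.mp (psiFun_injective m r S hS α β))

lemma psiPerm_apply (m r : ℕ) (S : Finset (Fin (m + r))) (hS : S.card = m)
    (α : Equiv.Perm (Fin m)) (β : Equiv.Perm (Fin r)) (i : Fin (m + r + 1)) :
    psiPerm m r S hS α β i = psiFun m r S hS α β i := rfl

lemma psiPerm_symm_last (m r : ℕ) (S : Finset (Fin (m + r))) (hS : S.card = m)
    (α : Equiv.Perm (Fin m)) (β : Equiv.Perm (Fin r)) :
    (psiPerm m r S hS α β).symm (Fin.last (m + r)) = ⟨m, by omega⟩ := by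
  rw [Equiv.symm_apply_eq, psiPerm_apply, psiFun_apply_eq]
  rfl

end Psi
section Psi2

open Finset

lemma psiPerm_isDownUp (m r : ℕ) (hm : m % 2 = 0) (S : Finset (Fin (m + r))) (hS : S.card = m)
    (α : Equiv.Perm (Fin m)) (β : Equiv.Perm (Fin r)) (hα : IsDownUp α) (hβ : IsUpDown β) :
    IsDownUp (psiPerm m r S hS α β) := by
  intro i hi
  by_cases h1 : (i : ℕ) + 1 < m
  · have hilt : (i : ℕ) < m := by omega
    rw [psiPerm_apply, psiPerm_apply, psiFun_apply_lt m r S hS α β i hilt,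
      psiFun_apply_lt m r S hS α β ⟨(i : ℕ) + 1, hi⟩ h1]
    have hcond := hα ⟨(i : ℕ), hilt⟩ (show ((⟨(i : ℕ), hilt⟩ : Fin m) : ℕ) + 1 < m from h1)
    split_ifs with hpar
    · rw [Fin.castSucc_lt_castSucc_iff, iso_coe_lt_iff]
      rw [if_pos hpar] at hcond
      exact hcond
    · rw [Fin.castSucc_lt_castSucc_iff, iso_coe_lt_iff]
      rw [if_neg hpar] at hcond
      exact hcond
  · by_cases h2 : (i : ℕ) + 1 = m
    · -- i = m - 1, which is odd since m is even and positive
      have hilt : (i : ℕ) < m := by omega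
      rw [psiPerm_apply, psiPerm_apply, psiFun_apply_lt m r S hS α β i hilt,
        psiFun_apply_eq m r S hS α β ⟨(i : ℕ) + 1, hi⟩ h2]
      rw [if_neg (show ¬((i : ℕ) % 2 = 0) from by omega)]
      exact Fin.castSucc_lt_last _
    · by_cases h3 : (i : ℕ) = m
      · rw [psiPerm_apply, psiPerm_apply, psiFun_apply_eq m r S hS α β i h3,
          psiFun_apply_gt m r S hS α β ⟨(i : ℕ) + 1, hi⟩ (show m < (i : ℕ) + 1 by omega)]
        rw [if_pos (show (i : ℕ) % 2 = 0 from by omega)]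
        exact Fin.castSucc_lt_last _
      · -- i > m : both in the right block
        have hgt : m < (i : ℕ) := by omega
        rw [psiPerm_apply, psiPerm_apply, psiFun_apply_gt m r S hS α β i hgt,
          psiFun_apply_gt m r S hS α β ⟨(i : ℕ) + 1, hi⟩ (show m < (i : ℕ) + 1 by omega)]
        have hjlt : (i : ℕ) - (m + 1) + 1 < r := by have := i.isLt; omega
        have hcond := hβ ⟨(i : ℕ) - (m + 1), by have := i.isLt; omega⟩
          (show ((⟨(i : ℕ) - (m + 1), by have := i.isLt; omega⟩ : Fin r) : ℕ) + 1 < r from hjlt)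
        have hidx : (⟨((⟨(i : ℕ) + 1, hi⟩ : Fin (m + r + 1)) : ℕ) - (m + 1),
            by have := hi; omega⟩ : Fin r)
            = ⟨((⟨(i : ℕ) - (m + 1), by have := i.isLt; omega⟩ : Fin r) : ℕ) + 1, hjlt⟩ :=
          Fin.ext (by simp only []; omega)
        rw [hidx]
        simp only [Fin.val_mk] at hcond
        split_ifs with hpar
        · rw [if_neg (show ¬(((i : ℕ) - (m + 1)) % 2 = 0) from by omega)] at hcond
          rw [Fin.castSucc_lt_castSucc_iff, iso_coe_lt_iff]
          exact hcond
        · rw [if_pos (show ((i : ℕ) - (m + 1)) % 2 = 0 from by omega)] at hcond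
          rw [Fin.castSucc_lt_castSucc_iff, iso_coe_lt_iff]
          exact hcond

end Psi2
section Psi3

open Finset

lemma psiPerm_mmp (m r : ℕ) (S : Finset (Fin (m + r))) (hS : S.card = m)
    (α : Equiv.Perm (Fin m)) (β : Equiv.Perm (Fin r)) :
    mmp1000 (psiPerm m r S hS α β) = m + mmp1000 β := by
  unfold mmp1000
  have hset : (Finset.univ.filter (fun i : Fin (m + r + 1) =>
        ∃ j, i < j ∧ psiPerm m r S hS α β i < psiPerm m r S hS α β j))
      = (Finset.univ.filter (fun i : Fin (m + r + 1) => (i : ℕ) < m))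
        ∪ (Finset.univ.filter (fun jj : Fin r => ∃ j', jj < j' ∧ β jj < β j')).image
            (fun j : Fin r => (⟨m + 1 + (j : ℕ), by have := j.isLt; omega⟩ : Fin (m + r + 1))) := by
    ext i
    simp only [Finset.mem_filter, Finset.mem_univ, true_and, Finset.mem_union, Finset.mem_image]
    constructor
    · rintro ⟨j, hij, hψ⟩
      by_cases h1 : (i : ℕ) < m
      · exact Or.inl h1
      by_cases h2 : (i : ℕ) = m
      · exfalso
        rw [psiPerm_apply, psiFun_apply_eq m r S hS α β i h2] at hψ
        exact absurd (Fin.le_last (psiFun m r S hS α β j)) (not_le.mpr hψ)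
      · right
        have higt : m < (i : ℕ) := by omega
        have hjgt : m < (j : ℕ) := by have := hij; omega
        rw [psiPerm_apply, psiPerm_apply, psiFun_apply_gt m r S hS α β i higt,
          psiFun_apply_gt m r S hS α β j hjgt,
          Fin.castSucc_lt_castSucc_iff, iso_coe_lt_iff] at hψ
        refine ⟨⟨(i : ℕ) - (m + 1), by have := i.isLt; omega⟩,
          ⟨⟨(j : ℕ) - (m + 1), by have := j.isLt; omega⟩, ?_, hψ⟩, Fin.ext (by simp only []; omega)⟩
        simp only [Fin.lt_def]
        have : (i : ℕ) < (j : ℕ) := hij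
        omega
    · rintro (h1 | ⟨jj, ⟨j', hlt, hβlt⟩, rfl⟩)
      · refine ⟨⟨m, by omega⟩, ?_, ?_⟩
        · simp only [Fin.lt_def]; omega
        · rw [psiPerm_apply, psiPerm_apply, psiFun_apply_lt m r S hS α β i h1,
            psiFun_apply_eq m r S hS α β ⟨m, by omega⟩ rfl]
          exact Fin.castSucc_lt_last _
      · refine ⟨⟨m + 1 + (j' : ℕ), by have := j'.isLt; omega⟩, ?_, ?_⟩
        · simp only [Fin.lt_def]
          have : (jj : ℕ) < (j' : ℕ) := hlt
          omega
        · rw [psiPerm_apply, psiPerm_apply,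
            psiFun_apply_gt m r S hS α β _ (show m < m + 1 + (jj : ℕ) by omega),
            psiFun_apply_gt m r S hS α β _ (show m < m + 1 + (j' : ℕ) by omega),
            Fin.castSucc_lt_castSucc_iff, iso_coe_lt_iff]
          have e1 : (⟨m + 1 + (jj : ℕ) - (m + 1), by have := jj.isLt; omega⟩ : Fin r) = jj :=
            Fin.ext (by simp only []; omega)
          have e2 : (⟨m + 1 + (j' : ℕ) - (m + 1), by have := j'.isLt; omega⟩ : Fin r) = j' :=
            Fin.ext (by simp only []; omega)
          rw [e1, e2]
          exact hβlt
  rw [hset, Finset.card_union_of_disjoint, card_filter_val_lt _ _ (by omega),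
    Finset.card_image_of_injective]
  · intro a b hab
    have : m + 1 + (a : ℕ) = m + 1 + (b : ℕ) := congrArg Fin.val hab
    exact Fin.ext (by omega)
  · rw [Finset.disjoint_left]
    rintro a ha hb
    simp only [Finset.mem_filter, Finset.mem_univ, true_and] at ha
    simp only [Finset.mem_image] at hb
    obtain ⟨j, _, rfl⟩ := hb
    simp only [Fin.val_mk] at ha
    omega

end Psi3
section Psi4

open Finset

lemma psiPerm_apply_left (m r : ℕ) (S : Finset (Fin (m + r))) (hS : S.card = m)
    (α : Equiv.Perm (Fin m)) (β : Equiv.Perm (Fin r)) (j : Fin m) :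
    psiPerm m r S hS α β ⟨(j : ℕ), by have := j.isLt; omega⟩
      = Fin.castSucc ((S.orderIsoOfFin hS (α j) : Fin (m + r))) := by
  rw [psiPerm_apply, psiFun_apply_lt m r S hS α β _ j.isLt]

lemma psiPerm_apply_right (m r : ℕ) (S : Finset (Fin (m + r))) (hS : S.card = m)
    (α : Equiv.Perm (Fin m)) (β : Equiv.Perm (Fin r)) (j : Fin r) :
    psiPerm m r S hS α β ⟨m + 1 + (j : ℕ), by have := j.isLt; omega⟩
      = Fin.castSucc ((Sᶜ.orderIsoOfFin (card_compl_eq S hS) (β j) : Fin (m + r))) := by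
  rw [psiPerm_apply, psiFun_apply_gt m r S hS α β _ (show m < m + 1 + (j : ℕ) by omega)]
  have hidx : (⟨m + 1 + (j : ℕ) - (m + 1), by have := j.isLt; omega⟩ : Fin r) = j :=
    Fin.ext (by simp only [Fin.val_mk]; omega)
  rw [hidx]

lemma psi_inj (m r : ℕ) (S S' : Finset (Fin (m + r))) (hS : S.card = m) (hS' : S'.card = m)
    (α α' : Equiv.Perm (Fin m)) (β β' : Equiv.Perm (Fin r))
    (h : psiPerm m r S hS α β = psiPerm m r S' hS' α' β') :
    S = S' ∧ α = α' ∧ β = β' := by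
  have hsub : ∀ (T T' : Finset (Fin (m + r))) (hT : T.card = m) (hT' : T'.card = m)
      (γ γ' : Equiv.Perm (Fin m)) (δ δ' : Equiv.Perm (Fin r)),
      psiPerm m r T hT γ δ = psiPerm m r T' hT' γ' δ' → T ⊆ T' := by
    intro T T' hT hT' γ γ' δ δ' heq v hv
    set c : Fin m := γ.symm ((T.orderIsoOfFin hT).symm ⟨v, hv⟩) with hc
    have h1 : psiPerm m r T hT γ δ ⟨(c : ℕ), by have := c.isLt; omega⟩ = Fin.castSucc v := by
      rw [psiPerm_apply_left]
      have : γ c = (T.orderIsoOfFin hT).symm ⟨v, hv⟩ := γ.apply_symm_apply _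
      rw [this, OrderIso.apply_symm_apply]
    rw [heq] at h1
    have h2 := psiPerm_apply_left m r T' hT' γ' δ' c
    rw [h1] at h2
    have h3 : v = (T'.orderIsoOfFin hT' (γ' c) : Fin (m + r)) :=
      Fin.castSucc_injective _ h2
    rw [h3]
    exact (T'.orderIsoOfFin hT' (γ' c)).2
  have hSS : S = S' :=
    Finset.Subset.antisymm (hsub S S' hS hS' α α' β β' h)
      (hsub S' S hS' hS α' α β' β h.symm)
  subst hSS
  obtain rfl := Subsingleton.elim hS hS'
  refine ⟨rfl, ?_, ?_⟩
  · ext j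
    have h1 := psiPerm_apply_left m r S hS α β j
    rw [h] at h1
    have h2 := psiPerm_apply_left m r S hS α' β' j
    rw [h1] at h2
    have h3 := Subtype.coe_injective (Fin.castSucc_injective _ h2)
    exact congrArg Fin.val ((S.orderIsoOfFin hS).injective h3)
  · ext j
    have h1 := psiPerm_apply_right m r S hS α β j
    rw [h] at h1
    have h2 := psiPerm_apply_right m r S hS α' β' j
    rw [h1] at h2
    have h3 := Subtype.coe_injective (Fin.castSucc_injective _ h2)
    exact congrArg Fin.val ((Sᶜ.orderIsoOfFin (card_compl_eq S hS)).injective h3)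

end Psi4
section Psi5

open Finset

lemma psi_surj (m r : ℕ) (hm : m % 2 = 0) (σ : Equiv.Perm (Fin (m + r + 1)))
    (hσ : IsDownUp σ) (hfib : ((σ.symm (Fin.last (m + r)) : Fin (m + r + 1)) : ℕ) = m) :
    ∃ (S : Finset (Fin (m + r))) (hS : S.card = m) (α : Equiv.Perm (Fin m))
      (β : Equiv.Perm (Fin r)), IsDownUp α ∧ IsUpDown β ∧ psiPerm m r S hS α β = σ := by
  classical
  have hpos : ∀ i : Fin (m + r + 1), (i : ℕ) ≠ m → σ i ≠ Fin.last (m + r) := by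
    intro i hi hcon
    apply hi
    have : i = σ.symm (Fin.last (m + r)) := by rw [← hcon, Equiv.symm_apply_apply]
    rw [this, hfib]
  set S : Finset (Fin (m + r)) := Finset.univ.filter
    (fun v => ((σ.symm v.castSucc : Fin (m + r + 1)) : ℕ) < m) with hSdef
  have hS : S.card = m := by
    have hcard : S.card = ((Finset.univ : Finset (Fin (m + r + 1))).filter
        (fun i : Fin (m + r + 1) => (i : ℕ) < m)).card := by
      refine Finset.card_bij' (fun v _ => σ.symm v.castSucc)
        (fun i hi => (σ i).castPred (hpos i (by
          simp only [Finset.mem_filter, Finset.mem_univ, true_and] at hi; omega))) ?_ ?_ ?_ ?_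
      · intro v hv
        simp only [hSdef, Finset.mem_filter, Finset.mem_univ, true_and] at hv ⊢
        exact hv
      · intro i hi
        simp only [hSdef, Finset.mem_filter, Finset.mem_univ, true_and] at hi ⊢
        rw [Fin.castSucc_castPred, Equiv.symm_apply_apply]
        exact hi
      · intro v _
        have : σ (σ.symm v.castSucc) = v.castSucc := σ.apply_symm_apply _
        simp only [this]
        exact Fin.castPred_castSucc _
      · intro i _
        simp only [Fin.castSucc_castPred, Equiv.symm_apply_apply]
    rw [hcard, card_filter_val_lt _ _ (by omega)]
  -- the left pattern
  have hneA : ∀ z : Fin m, σ ⟨(z : ℕ), by have := z.isLt; omega⟩ ≠ Fin.last (m + r) :=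
    fun z => hpos _ (show (z : ℕ) ≠ m from by have := z.isLt; omega)
  have hmemS : ∀ z : Fin m,
      (σ ⟨(z : ℕ), by have := z.isLt; omega⟩).castPred (hneA z) ∈ S := by
    intro z
    simp only [hSdef, Finset.mem_filter, Finset.mem_univ, true_and]
    rw [Fin.castSucc_castPred, Equiv.symm_apply_apply]
    exact z.isLt
  set afun : Fin m → Fin m := fun z =>
    (S.orderIsoOfFin hS).symm ⟨_, hmemS z⟩ with hafun
  have hainj : Function.Injective afun := by
    intro a b hab
    have h1 := (S.orderIsoOfFin hS).symm.injective hab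
    have h2 := congrArg Fin.castSucc (congrArg Subtype.val h1)
    rw [Fin.castSucc_castPred, Fin.castSucc_castPred] at h2
    have h4 := σ.injective h2
    simp only [Fin.mk.injEq] at h4
    exact Fin.ext h4
  set α : Equiv.Perm (Fin m) :=
    Equiv.ofBijective afun (Finite.injective_iff_bijective.mp hainj) with hα
  -- the right pattern
  have hneB : ∀ z : Fin r, σ ⟨m + 1 + (z : ℕ), by have := z.isLt; omega⟩ ≠ Fin.last (m + r) :=
    fun z => hpos _ (show m + 1 + (z : ℕ) ≠ m from by omega)
  have hmemSc : ∀ z : Fin r,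
      (σ ⟨m + 1 + (z : ℕ), by have := z.isLt; omega⟩).castPred (hneB z) ∈ Sᶜ := by
    intro z
    simp only [hSdef, Finset.mem_compl, Finset.mem_filter, Finset.mem_univ, true_and]
    rw [Fin.castSucc_castPred, Equiv.symm_apply_apply]
    simp only [Fin.val_mk]
    omega
  set bfun : Fin r → Fin r := fun z =>
    (Sᶜ.orderIsoOfFin (card_compl_eq S hS)).symm ⟨_, hmemSc z⟩ with hbfun
  have hbinj : Function.Injective bfun := by
    intro a b hab
    have h1 := (Sᶜ.orderIsoOfFin (card_compl_eq S hS)).symm.injective hab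
    have h2 := congrArg Fin.castSucc (congrArg Subtype.val h1)
    rw [Fin.castSucc_castPred, Fin.castSucc_castPred] at h2
    have h4 := σ.injective h2
    simp only [Fin.mk.injEq] at h4
    exact Fin.ext (by omega)
  set β : Equiv.Perm (Fin r) :=
    Equiv.ofBijective bfun (Finite.injective_iff_bijective.mp hbinj) with hβ
  -- comparison transfer
  have hcmpA : ∀ z w : Fin m,
      (α z < α w ↔ σ ⟨(z : ℕ), by have := z.isLt; omega⟩ < σ ⟨(w : ℕ), by have := w.isLt; omega⟩) := by
    intro z w
    show afun z < afun w ↔ _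
    rw [hafun]
    rw [(S.orderIsoOfFin hS).symm.lt_iff_lt]
    rw [← Subtype.coe_lt_coe]
    simp only [Fin.lt_def, Fin.coe_castPred]
  have hcmpB : ∀ z w : Fin r,
      (β z < β w ↔ σ ⟨m + 1 + (z : ℕ), by have := z.isLt; omega⟩
        < σ ⟨m + 1 + (w : ℕ), by have := w.isLt; omega⟩) := by
    intro z w
    show bfun z < bfun w ↔ _
    rw [hbfun]
    rw [(Sᶜ.orderIsoOfFin (card_compl_eq S hS)).symm.lt_iff_lt]
    rw [← Subtype.coe_lt_coe]
    simp only [Fin.lt_def, Fin.coe_castPred]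
  refine ⟨S, hS, α, β, ?_, ?_, ?_⟩
  · -- IsDownUp α
    intro z hz
    have hcond := hσ ⟨(z : ℕ), by have := z.isLt; omega⟩
      (show (z : ℕ) + 1 < m + r + 1 from by omega)
    by_cases hpar : (z : ℕ) % 2 = 0
    · rw [if_pos hpar] at hcond ⊢
      rw [hcmpA]
      exact hcond
    · rw [if_neg hpar] at hcond ⊢
      rw [hcmpA]
      exact hcond
  · -- IsUpDown β
    intro z hz
    have hcond := hσ ⟨m + 1 + (z : ℕ), by have := z.isLt; omega⟩
      (show m + 1 + (z : ℕ) + 1 < m + r + 1 from by omega)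
    by_cases hpar : (z : ℕ) % 2 = 0
    · rw [if_pos hpar]
      rw [if_neg (show ¬((m + 1 + (z : ℕ)) % 2 = 0) from by omega)] at hcond
      rw [hcmpB]
      exact hcond
    · rw [if_neg hpar]
      rw [if_pos (show (m + 1 + (z : ℕ)) % 2 = 0 from by omega)] at hcond
      rw [hcmpB]
      exact hcond
  · -- psiPerm = σ
    apply Equiv.ext
    intro i
    by_cases h1 : (i : ℕ) < m
    · have happ := psiPerm_apply_left m r S hS α β ⟨(i : ℕ), h1⟩
      refine Eq.trans happ ?_
      have h2 : (S.orderIsoOfFin hS) (α ⟨(i : ℕ), h1⟩)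
          = ⟨_, hmemS ⟨(i : ℕ), h1⟩⟩ := (S.orderIsoOfFin hS).apply_symm_apply _
      rw [h2]
      exact Fin.castSucc_castPred _ (hneA ⟨(i : ℕ), h1⟩)
    · by_cases h2 : (i : ℕ) = m
      · rw [psiPerm_apply, psiFun_apply_eq m r S hS α β i h2]
        have : σ.symm (Fin.last (m + r)) = i := Fin.ext (by rw [hfib, h2])
        rw [← this, Equiv.apply_symm_apply]
      · have h3 : m < (i : ℕ) := by omega
        have hj : (i : ℕ) - (m + 1) < r := by have := i.isLt; omega
        have happ := psiPerm_apply_right m r S hS α β ⟨(i : ℕ) - (m + 1), hj⟩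
        have hpos2 : (⟨m + 1 + ((⟨(i : ℕ) - (m + 1), hj⟩ : Fin r) : ℕ),
            by have := hj; simp only [Fin.val_mk]; omega⟩ : Fin (m + r + 1)) = i :=
          Fin.ext (by simp only [Fin.val_mk]; omega)
        rw [hpos2] at happ
        refine Eq.trans happ ?_
        have h4 : (Sᶜ.orderIsoOfFin (card_compl_eq S hS)) (β ⟨(i : ℕ) - (m + 1), hj⟩)
            = ⟨_, hmemSc ⟨(i : ℕ) - (m + 1), hj⟩⟩ :=
          (Sᶜ.orderIsoOfFin (card_compl_eq S hS)).apply_symm_apply _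
        rw [h4]
        have h5 := Fin.castSucc_castPred _ (hneB ⟨(i : ℕ) - (m + 1), hj⟩)
        refine Eq.trans h5 ?_
        exact congrArg σ (Fin.ext (by simp only [Fin.val_mk]; omega))

end Psi5
section KeyLemma

open Finset

lemma mem_DUset_iff {q : ℕ} {σ : Equiv.Perm (Fin q)} : σ ∈ DUset q ↔ IsDownUp σ := by
  classical
  simp [DUset]

lemma mem_UDset_iff {q : ℕ} {σ : Equiv.Perm (Fin q)} : σ ∈ UDset q ↔ IsUpDown σ := by
  classical
  simp [UDset]

lemma key_lemma (k r : ℕ) (x : ℤ) :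
    ∑ σ ∈ (DUset (2 * k + r + 1)).filter
        (fun σ => ((σ.symm (Fin.last (2 * k + r)) : Fin (2 * k + r + 1)) : ℕ) = 2 * k),
      x ^ mmp1000 σ
    = (Nat.choose (2 * k + r) (2 * k) : ℤ) * (duCount (2 * k) : ℤ) * x ^ (2 * k)
        * ∑ β ∈ UDset r, x ^ mmp1000 β := by
  classical
  have hm : (2 * k) % 2 = 0 := by omega
  have h1 : ∑ d ∈ ((Finset.univ.powersetCard (2 * k) : Finset (Finset (Fin (2 * k + r)))) ×ˢ
        (DUset (2 * k) ×ˢ UDset r)), x ^ (2 * k + mmp1000 d.2.2)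
      = ∑ σ ∈ (DUset (2 * k + r + 1)).filter
          (fun σ => ((σ.symm (Fin.last (2 * k + r)) : Fin (2 * k + r + 1)) : ℕ) = 2 * k),
        x ^ mmp1000 σ := by
    refine Finset.sum_bij (fun d hd => psiPerm (2 * k) r d.1
      (Finset.mem_powersetCard_univ.mp (Finset.mem_product.mp hd).1) d.2.1 d.2.2)
      ?_ ?_ ?_ ?_
    · intro d hd
      obtain ⟨hd1, hd2⟩ := Finset.mem_product.mp hd
      obtain ⟨hd2a, hd2b⟩ := Finset.mem_product.mp hd2
      refine Finset.mem_filter.mpr ⟨?_, ?_⟩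
      · exact mem_DUset_iff.mpr (psiPerm_isDownUp (2 * k) r hm _ _ _ _
          (mem_DUset_iff.mp hd2a) (mem_UDset_iff.mp hd2b))
      · rw [psiPerm_symm_last]
    · intro d1 hd1 d2 hd2 heq
      obtain ⟨e1, e2, e3⟩ := psi_inj (2 * k) r d1.1 d2.1 _ _ d1.2.1 d2.2.1 d1.2.2 d2.2.2 heq
      exact Prod.ext e1 (Prod.ext e2 e3)
    · intro σ hσ
      obtain ⟨hσ1, hσ2⟩ := Finset.mem_filter.mp hσ
      obtain ⟨S, hS, α, β, hα, hβ, hψ⟩ := psi_surj (2 * k) r hm σ (mem_DUset_iff.mp hσ1) hσ2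
      refine ⟨(S, α, β), Finset.mem_product.mpr ⟨Finset.mem_powersetCard_univ.mpr hS,
        Finset.mem_product.mpr ⟨mem_DUset_iff.mpr hα, mem_UDset_iff.mpr hβ⟩⟩, ?_⟩
      exact (by exact hψ)
    · intro d hd
      rw [psiPerm_mmp]
  rw [← h1, Finset.sum_product]
  have hinner : ∀ S ∈ (Finset.univ.powersetCard (2 * k) : Finset (Finset (Fin (2 * k + r)))),
      (∑ ab ∈ DUset (2 * k) ×ˢ UDset r, x ^ (2 * k + mmp1000 ab.2))
      = (duCount (2 * k) : ℤ) * (x ^ (2 * k) * ∑ β ∈ UDset r, x ^ mmp1000 β) := by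
    intro S _
    rw [Finset.sum_product]
    have hin2 : ∀ a ∈ DUset (2 * k), (∑ b ∈ UDset r, x ^ (2 * k + mmp1000 ((a, b) : Equiv.Perm (Fin (2 * k)) × Equiv.Perm (Fin r)).2))
        = x ^ (2 * k) * ∑ β ∈ UDset r, x ^ mmp1000 β := by
      intro a _
      rw [Finset.mul_sum]
      exact Finset.sum_congr rfl (fun b _ => pow_add x _ _)
    rw [Finset.sum_congr rfl hin2, Finset.sum_const, nsmul_eq_mul]
    rfl
  rw [Finset.sum_congr rfl hinner, Finset.sum_const, Finset.card_powersetCard,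
    Finset.card_univ, Fintype.card_fin, nsmul_eq_mul]
  ring

end KeyLemma

theorem stmt6 (n : ℕ) (hn : 1 ≤ n) (x : ℤ) :
    Dpoly n x = ∑ k ∈ Finset.range (n + 1),
      (Nat.choose (2 * n) (2 * k) : ℤ) * (udCount (2 * k) : ℤ) *
        x ^ (2 * k) * Apoly (n - k) x := by
  classical
  rw [Dpoly]
  have hmaps : ∀ σ ∈ DUset (2 * n + 1),
      ((σ.symm (Fin.last (2 * n)) : Fin (2 * n + 1)) : ℕ) / 2 ∈ Finset.range (n + 1) := by
    intro σ _
    have := (σ.symm (Fin.last (2 * n))).isLt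
    rw [Finset.mem_range]
    omega
  rw [← Finset.sum_fiberwise_of_maps_to hmaps (fun σ => x ^ mmp1000 σ)]
  refine Finset.sum_congr rfl ?_
  intro k hk
  have hkn : k ≤ n := by rw [Finset.mem_range] at hk; omega
  obtain ⟨r, hr⟩ : ∃ r, 2 * n = 2 * k + r := ⟨2 * n - 2 * k, by omega⟩
  rw [Apoly, show 2 * (n - k) = r from by omega, ← duCount_eq_udCount]
  rw [hr]
  have hfeq : (DUset (2 * k + r + 1)).filter
        (fun σ => ((σ.symm (Fin.last (2 * k + r)) : Fin (2 * k + r + 1)) : ℕ) / 2 = k)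
      = (DUset (2 * k + r + 1)).filter
        (fun σ => ((σ.symm (Fin.last (2 * k + r)) : Fin (2 * k + r + 1)) : ℕ) = 2 * k) := by
    apply Finset.filter_congr
    intro σ hσ
    have hev := symm_last_even σ (mem_DUset_iff.mp hσ)
    constructor <;> intro h <;> omega
  rw [hfeq, key_lemma k r x]
end

section
/- For all n ≥ 1, the number of up-down permutations σ of length 2n with mmp^{(1,0,0,0)}(σ) = n is exactly (2n-1)!! = 1·3·5⋯(2n-1). -/
open Finset

set_option maxHeartbeats 1600000

def Good (M : ℕ) (σ : Equiv.Perm (Fin M)) : Prop :=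
  (∀ i : ℕ, ∀ h : i + 1 < M, i % 2 = 0 → σ ⟨i, by omega⟩ < σ ⟨i + 1, h⟩) ∧
  (∀ i j : ℕ, ∀ hi : i < M, ∀ hj : j < M, i % 2 = 1 → i < j → σ ⟨j, hj⟩ < σ ⟨i, hi⟩)

lemma card_evens (m : ℕ) :
    (univ.filter (fun i : Fin (2*m) => (i : ℕ) % 2 = 0)).card = m := by
  have h : (univ.filter (fun i : Fin (2*m) => (i : ℕ) % 2 = 0)).card
      = (univ : Finset (Fin m)).card := by
    refine Finset.card_bij' (fun a _ => (⟨(a:ℕ)/2, by have := a.isLt; omega⟩ : Fin m))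
      (fun b _ => (⟨2*(b:ℕ), by have := b.isLt; omega⟩ : Fin (2*m))) ?_ ?_ ?_ ?_
    · intro a ha; exact Finset.mem_univ _
    · intro b _
      simp only [Finset.mem_filter, Finset.mem_univ, true_and]
      omega
    · intro a ha
      simp only [Finset.mem_filter, Finset.mem_univ, true_and] at ha
      apply Fin.ext; simp; omega
    · intro b _; apply Fin.ext; simp
  simpa using h

lemma mmp_eq_of (m : ℕ) (σ : Equiv.Perm (Fin (2*m))) (hud : IsUpDown σ) :
    mmp1000 σ = m ↔ ∀ i j : Fin (2*m), (i:ℕ) % 2 = 1 → i < j → σ j < σ i := by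
  unfold mmp1000
  set F := (Finset.univ.filter (fun i : Fin (2*m) => ∃ j : Fin (2*m), i < j ∧ σ i < σ j)) with hF
  set E := (univ.filter (fun i : Fin (2*m) => (i : ℕ) % 2 = 0)) with hE
  have hEF : E ⊆ F := by
    intro i hi
    simp only [hE, Finset.mem_filter, Finset.mem_univ, true_and] at hi
    have hlt : (i:ℕ) + 1 < 2*m := by have := i.isLt; omega
    have := hud i hlt
    rw [if_pos hi] at this
    simp only [hF, Finset.mem_filter, Finset.mem_univ, true_and]
    exact ⟨⟨(i:ℕ)+1, hlt⟩, by simp [Fin.lt_def], this⟩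
  have hEc : E.card = m := card_evens m
  constructor
  · intro hm i j hodd hij
    have hFE : E = F := Finset.eq_of_subset_of_card_le hEF (by rw [hm, hEc])
    by_contra hc
    have hne : σ i ≠ σ j := σ.injective.ne (ne_of_lt hij)
    have : σ i < σ j := lt_of_le_of_ne (not_lt.mp hc) hne
    have hiF : i ∈ F := by
      simp only [hF, Finset.mem_filter, Finset.mem_univ, true_and]
      exact ⟨j, hij, this⟩
    rw [← hFE] at hiF
    simp only [hE, Finset.mem_filter, Finset.mem_univ, true_and] at hiF
    omega
  · intro h
    have hFE : F = E := by
      apply Finset.Subset.antisymm _ hEF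
      intro i hi
      simp only [hF, Finset.mem_filter, Finset.mem_univ, true_and] at hi
      obtain ⟨j, hij, hlt⟩ := hi
      simp only [hE, Finset.mem_filter, Finset.mem_univ, true_and]
      by_contra hc
      have : (i:ℕ) % 2 = 1 := by omega
      exact absurd hlt (asymm (h i j this hij))
    rw [hFE, hEc]

lemma good_iff (m : ℕ) (σ : Equiv.Perm (Fin (2*m))) :
    (IsUpDown σ ∧ mmp1000 σ = m) ↔ Good (2*m) σ := by
  constructor
  · rintro ⟨hud, hm⟩
    refine ⟨?_, ?_⟩
    · intro i h hi
      have := hud ⟨i, by omega⟩ h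
      rwa [if_pos hi] at this
    · intro i j hi hj hodd hij
      exact (mmp_eq_of m σ hud).1 hm ⟨i, hi⟩ ⟨j, hj⟩ hodd hij
  · intro hg
    have hud : IsUpDown σ := by
      intro i h
      by_cases hp : (i:ℕ) % 2 = 0
      · rw [if_pos hp]; exact hg.1 (i:ℕ) h hp
      · rw [if_neg hp]
        exact hg.2 (i:ℕ) ((i:ℕ)+1) (by omega) h (by omega) (by omega)
    exact ⟨hud, (mmp_eq_of m σ hud).2
      (fun i j ho hij => hg.2 (i:ℕ) (j:ℕ) i.isLt j.isLt ho hij)⟩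

open scoped Classical in
noncomputable def GoodSet (M : ℕ) : Finset (Equiv.Perm (Fin M)) :=
  univ.filter (Good M)

def buildFun (m : ℕ) (v : Fin (2*m+1)) (τ : Equiv.Perm (Fin (2*m))) :
    Fin (2*m+2) → Fin (2*m+2) := fun j =>
  if h : 2 ≤ (j : ℕ) then
    (v.succAbove (τ ⟨(j:ℕ) - 2, by have := j.isLt; omega⟩)).castSucc
  else if (j : ℕ) = 0 then v.castSucc
  else Fin.last (2*m+1)

lemma buildFun_injective (m : ℕ) (v : Fin (2*m+1)) (τ : Equiv.Perm (Fin (2*m))) :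
    Function.Injective (buildFun m v τ) := by
  intro a b hab
  unfold buildFun at hab
  split_ifs at hab with h1 h2 h3 h4 h5 h6 h7 h8
  · have := Fin.castSucc_injective _ hab
    have := Fin.succAbove_right_injective this
    have := τ.injective this
    have : (a:ℕ) - 2 = (b:ℕ) - 2 := congrArg Fin.val this
    apply Fin.ext; omega
  · exact absurd (Fin.castSucc_injective _ hab) (Fin.succAbove_ne v _)
  · exact absurd hab (ne_of_lt (Fin.castSucc_lt_last _))
  · exact absurd (Fin.castSucc_injective _ hab.symm) (Fin.succAbove_ne v _)
  · apply Fin.ext; omega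
  · exact absurd hab (ne_of_lt (Fin.castSucc_lt_last _))
  · exact absurd hab.symm (ne_of_lt (Fin.castSucc_lt_last _))
  · exact absurd hab.symm (ne_of_lt (Fin.castSucc_lt_last _))
  · apply Fin.ext; omega

noncomputable def buildPerm (m : ℕ) (v : Fin (2*m+1)) (τ : Equiv.Perm (Fin (2*m))) :
    Equiv.Perm (Fin (2*m+2)) :=
  Equiv.ofBijective _ (Finite.injective_iff_bijective.mp (buildFun_injective m v τ))

lemma buildPerm_apply (m : ℕ) (v : Fin (2*m+1)) (τ : Equiv.Perm (Fin (2*m)))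
    (j : Fin (2*m+2)) : buildPerm m v τ j = buildFun m v τ j := rfl


lemma build_zero (m : ℕ) (v : Fin (2*m+1)) (τ : Equiv.Perm (Fin (2*m)))
    (h : 0 < 2*m+2) : buildPerm m v τ ⟨0, h⟩ = v.castSucc := by
  rw [buildPerm_apply]; unfold buildFun; norm_num

lemma build_one (m : ℕ) (v : Fin (2*m+1)) (τ : Equiv.Perm (Fin (2*m)))
    (h : 1 < 2*m+2) : buildPerm m v τ ⟨1, h⟩ = Fin.last (2*m+1) := by
  rw [buildPerm_apply]; unfold buildFun; norm_num

lemma build_two (m : ℕ) (v : Fin (2*m+1)) (τ : Equiv.Perm (Fin (2*m)))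
    (k : ℕ) (hk : k < 2*m) (h : k+2 < 2*m+2) :
    buildPerm m v τ ⟨k+2, h⟩ = (v.succAbove (τ ⟨k, hk⟩)).castSucc := by
  rw [buildPerm_apply]; unfold buildFun
  rw [dif_pos (show 2 ≤ ((⟨k+2, h⟩ : Fin (2*m+2)) : ℕ) from Nat.le_add_left 2 k)]
  rfl

lemma good_build (m : ℕ) (v : Fin (2*m+1)) (τ : Equiv.Perm (Fin (2*m)))
    (hτ : Good (2*m) τ) : Good (2*m+2) (buildPerm m v τ) := by
  constructor
  · intro i h hi
    rcases Nat.eq_zero_or_pos i with h0 | hpos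
    · subst h0
      rw [build_zero, build_one]
      exact Fin.castSucc_lt_last v
    · have h2 : 2 ≤ i := by omega
      obtain ⟨k, rfl⟩ : ∃ k, i = k + 2 := ⟨i - 2, by omega⟩
      rw [show (⟨k+2+1, h⟩ : Fin (2*m+2)) = ⟨(k+1)+2, h⟩ from rfl,
        build_two m v τ k (by omega), build_two m v τ (k+1) (by omega),
        Fin.castSucc_lt_castSucc_iff, Fin.succAbove_lt_succAbove_iff]
      exact hτ.1 k (by omega) (by omega)
  · intro i j hi hj hodd hij
    have hj2 : 2 ≤ j := by omega
    obtain ⟨l, rfl⟩ : ∃ l, j = l + 2 := ⟨j - 2, by omega⟩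
    rcases Nat.lt_or_ge i 2 with h2 | h2
    · have h1 : i = 1 := by omega
      subst h1
      rw [build_one, build_two m v τ l (by omega)]
      exact Fin.castSucc_lt_last _
    · obtain ⟨k, rfl⟩ : ∃ k, i = k + 2 := ⟨i - 2, by omega⟩
      rw [build_two m v τ k (by omega), build_two m v τ l (by omega),
        Fin.castSucc_lt_castSucc_iff, Fin.succAbove_lt_succAbove_iff]
      exact hτ.2 k l (by omega) (by omega) (by omega) (by omega)

lemma build_inj (m : ℕ) : Function.Injective
    (fun p : Fin (2*m+1) × Equiv.Perm (Fin (2*m)) => buildPerm m p.1 p.2) := by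
  rintro ⟨v, τ⟩ ⟨w, ρ⟩ h
  simp only at h
  have hv : v = w := by
    have h0 := congrArg (fun f : Equiv.Perm (Fin (2*m+2)) => f ⟨0, by omega⟩) h
    simp only [build_zero] at h0
    exact Fin.castSucc_injective _ h0
  subst hv
  have hτ : τ = ρ := by
    apply Equiv.ext; intro k
    have h2 : (k:ℕ)+2 < 2*m+2 := by have := k.isLt; omega
    have hk := congrArg (fun f : Equiv.Perm (Fin (2*m+2)) => f ⟨(k:ℕ)+2, h2⟩) h
    simp only [build_two m v τ (k:ℕ) k.isLt, build_two m v ρ (k:ℕ) k.isLt] at hk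
    exact Fin.succAbove_right_injective (Fin.castSucc_injective _ hk)
  rw [hτ]

lemma good_surj (m : ℕ) (σ : Equiv.Perm (Fin (2*m+2))) (hσ : Good (2*m+2) σ) :
    ∃ v τ, Good (2*m) τ ∧ buildPerm m v τ = σ := by
  have hmax : ∀ j : Fin (2*m+2), (j:ℕ) ≠ 1 → σ j < σ ⟨1, by omega⟩ := by
    intro j hj
    rcases Nat.lt_or_ge (j:ℕ) 1 with h | h
    · have h0 : j = ⟨0, by omega⟩ := Fin.ext (show (j:ℕ) = 0 by omega)
      rw [h0]
      exact hσ.1 0 (by omega) (by norm_num)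
    · exact hσ.2 1 (j:ℕ) (by omega) j.isLt (by norm_num) (by omega)
  have h1 : σ ⟨1, by omega⟩ = Fin.last (2*m+1) := by
    obtain ⟨j0, hj0⟩ := σ.surjective (Fin.last (2*m+1))
    by_cases hj : (j0:ℕ) = 1
    · rw [← hj0]; congr 1; exact Fin.ext hj.symm
    · have := hmax j0 hj
      rw [hj0] at this
      exact absurd this (not_lt.mpr (Fin.le_last _))
  have h0ne : σ ⟨0, by omega⟩ ≠ Fin.last (2*m+1) := by
    have h0lt := hmax ⟨0, by omega⟩ (by simp)
    rw [h1] at h0lt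
    exact ne_of_lt h0lt
  obtain ⟨v, hv⟩ := Fin.exists_castSucc_eq.mpr h0ne
  have hex : ∀ k : Fin (2*m), ∃ t : Fin (2*m),
      (v.succAbove t).castSucc = σ ⟨(k:ℕ)+2, by have := k.isLt; omega⟩ := by
    intro k
    have hk2 : (k:ℕ)+2 < 2*m+2 := by have := k.isLt; omega
    have hne : σ ⟨(k:ℕ)+2, hk2⟩ ≠ Fin.last (2*m+1) := by
      have hlt := hmax ⟨(k:ℕ)+2, hk2⟩ (by simp)
      rw [h1] at hlt
      exact ne_of_lt hlt
    obtain ⟨u, hu⟩ := Fin.exists_castSucc_eq.mpr hne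
    have huv : u ≠ v := by
      intro he; subst he
      have he2 : σ ⟨(k:ℕ)+2, hk2⟩ = σ ⟨0, by omega⟩ := by rw [← hu, hv]
      have := congrArg Fin.val (σ.injective he2)
      simp at this
    obtain ⟨t, ht⟩ := Fin.exists_succAbove_eq huv
    exact ⟨t, by rw [ht, hu]⟩
  choose t ht using hex
  have tinj : Function.Injective t := by
    intro a b hab
    have hab2 : (v.succAbove (t a)).castSucc = (v.succAbove (t b)).castSucc := by rw [hab]
    rw [ht a, ht b] at hab2
    have := congrArg Fin.val (σ.injective hab2)
    simp at this
    exact Fin.ext this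
  refine ⟨v, Equiv.ofBijective t (Finite.injective_iff_bijective.mp tinj), ⟨?_, ?_⟩, ?_⟩
  · intro i h hi
    simp only [Equiv.ofBijective_apply]
    rw [← Fin.succAbove_lt_succAbove_iff (p := v), ← Fin.castSucc_lt_castSucc_iff, ht, ht]
    exact hσ.1 (i+2) (by omega) (by omega)
  · intro i j hi hj hodd hij
    simp only [Equiv.ofBijective_apply]
    rw [← Fin.succAbove_lt_succAbove_iff (p := v), ← Fin.castSucc_lt_castSucc_iff, ht, ht]
    exact hσ.2 (i+2) (j+2) (by omega) (by omega) (by omega) (by omega)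
  · apply Equiv.ext; intro j
    by_cases h2 : 2 ≤ (j:ℕ)
    · have hj : j = ⟨((j:ℕ)-2)+2, by have := j.isLt; omega⟩ :=
        Fin.ext (show (j:ℕ) = (j:ℕ)-2+2 by omega)
      rw [hj, build_two m v _ ((j:ℕ)-2) (by have := j.isLt; omega)]
      exact ht ⟨(j:ℕ)-2, by have := j.isLt; omega⟩
    · by_cases h0 : (j:ℕ) = 0
      · have hj : j = ⟨0, by omega⟩ := Fin.ext h0
        rw [hj, build_zero]; exact hv
      · have hj : j = ⟨1, by omega⟩ := Fin.ext (show (j:ℕ) = 1 by omega)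
        rw [hj, build_one]; exact h1.symm

lemma goodset_step (m : ℕ) :
    (GoodSet (2*m+2)).card = (2*m+1) * (GoodSet (2*m)).card := by
  classical
  have himg : GoodSet (2*m+2) =
      Finset.image (fun p : Fin (2*m+1) × Equiv.Perm (Fin (2*m)) => buildPerm m p.1 p.2)
        ((univ : Finset (Fin (2*m+1))) ×ˢ GoodSet (2*m)) := by
    ext σ
    simp only [GoodSet, Finset.mem_filter, Finset.mem_univ, true_and, Finset.mem_image,
      Finset.mem_product]
    constructor
    · intro hσ
      obtain ⟨v, τ, hτ, he⟩ := good_surj m σ hσ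
      exact ⟨(v, τ), hτ, he⟩
    · rintro ⟨⟨v, τ⟩, hτ, rfl⟩
      exact good_build m v τ hτ
  rw [himg, Finset.card_image_of_injOn ((build_inj m).injOn), Finset.card_product]
  simp

lemma goodset_zero : (GoodSet 0).card = 1 := by
  classical
  have : GoodSet 0 = univ := by
    rw [GoodSet]
    apply Finset.filter_true_of_mem
    intro σ _
    exact ⟨fun i h => by omega, fun i j hi => by omega⟩
  rw [this]
  simp [Finset.card_univ]

lemma cardGood (n : ℕ) : (GoodSet (2*n)).card = Nat.doubleFactorial (2*n - 1) := by
  induction n with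
  | zero => simpa using goodset_zero
  | succ k ih =>
    have h1 : (GoodSet (2*(k+1))).card = (2*k+1) * (GoodSet (2*k)).card := goodset_step k
    rw [h1, ih]
    rcases k with _ | l
    · simp [Nat.doubleFactorial]
    · rw [show 2*(l+1) - 1 = 2*l+1 by omega, show 2*(l+1+1) - 1 = (2*l+1)+2 by omega,
        Nat.doubleFactorial_add_two]
      rw [show 2*(l+1)+1 = 2*l+1+2 by ring]

theorem stmt8 (n : ℕ) (hn : 1 ≤ n) :
    AcountEq n n = Nat.doubleFactorial (2 * n - 1) := by
  classical
  have hset : (UDset (2*n)).filter (fun σ => mmp1000 σ = n) = GoodSet (2*n) := by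
    ext σ
    simp only [UDset, GoodSet, Finset.mem_filter, Finset.mem_univ, true_and]
    exact good_iff n σ
  unfold AcountEq
  rw [hset, cardGood n]
end
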